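/- arXiv:1702.03884 — 7 statements merged into one kernel-verified Lean document; each statement's English description precedes it below -/
import Mathlib

section
/- Let G = (V, D, B) be a mixed graph on n vertices with edge-indeterminate matrices Λ (supported on D) and Ω (supported on B ∪ diagonal), and let Σ = (I − Λ)⁻ᵀ Ω (I − Λ)⁻¹ where (I − Λ)⁻¹ is interpreted as the formal power series I + Σ_{k≥1} Λᵏ. Then for all vertices v, w, the entry Σ_{vw} equals the sum over all treks π from v to w of the trek monomial π(Λ,Ω). -/
open scoped BigOperators

/-- A mixed graph on `n` vertices: directed edges `D` and symmetric bidirected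
edges `B`, with no self-loops. -/
structure MixedGraph (n : ℕ) where
  D : Fin n → Fin n → Prop
  B : Fin n → Fin n → Prop
  B_symm : ∀ i j, B i j → B j i
  D_irrefl : ∀ i, ¬ D i i
  B_irrefl : ∀ i, ¬ B i i

namespace MixedGraph

variable {n : ℕ}

/-- A trek from `v` to `w` in a mixed graph: a walk with no colliding arrowheads,
consisting of a left-hand side `L 0 = v, L 1, …, L p` (each step along a directed
edge `L (i+1) → L i`, traversed backwards from `v` up to the top `L p`),
then either (`bid = true`) one bidirected edge `L p ↔ R 0`, or (`bid = false`)
`L p = R 0`, and a right-hand side `R 0, …, R q = w` walking forwards along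
directed edges `R j → R (j+1)`.  Vertices may repeat (treks are walks). -/
structure Trek (G : MixedGraph n) (v w : Fin n) where
  p : ℕ
  q : ℕ
  L : Fin (p + 1) → Fin n
  R : Fin (q + 1) → Fin n
  hL : ∀ i : Fin p, G.D (L i.succ) (L i.castSucc)
  hR : ∀ i : Fin q, G.D (R i.castSucc) (R i.succ)
  bid : Bool
  hconn : if bid then G.B (L (Fin.last p)) (R 0) else L (Fin.last p) = R 0
  hv : L 0 = v
  hw : R (Fin.last q) = w

namespace Trek

variable {G : MixedGraph n} {v w : Fin n}

/-- The vertices on the left-hand side of a trek (including the top). -/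
def leftVerts (π : Trek G v w) : Set (Fin n) := Set.range π.L

/-- The vertices on the right-hand side of a trek (including the top). -/
def rightVerts (π : Trek G v w) : Set (Fin n) := Set.range π.R

/-- The trek monomial of a trek, with respect to parameter matrices
`lam` (directed edge coefficients) and `om` (error covariances):
`ω_{top-left, top-right} ∏ λ_{x y}` over all directed edges of the trek. -/
def monom {R' : Type*} [CommSemiring R'] (lam om : Fin n → Fin n → R')
    (π : Trek G v w) : R' :=
  om (π.L (Fin.last π.p)) (π.R 0)
    * (∏ i : Fin π.p, lam (π.L i.succ) (π.L i.castSucc))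
    * ∏ i : Fin π.q, lam (π.R i.castSucc) (π.R i.succ)

/-- A half-trek is a trek whose left-hand side consists of a single vertex. -/
def IsHalfTrek (π : Trek G v w) : Prop := π.p = 0

/-- The trek uses the directed edge `a → b` on its left-hand side. -/
def usesLeft (π : Trek G v w) (a b : Fin n) : Prop :=
  ∃ i : Fin π.p, π.L i.succ = a ∧ π.L i.castSucc = b

/-- The trek uses the directed edge `a → b` on its right-hand side. -/
def usesRight (π : Trek G v w) (a b : Fin n) : Prop :=
  ∃ i : Fin π.q, π.R i.castSucc = a ∧ π.R i.succ = b

/-- The trek is non-empty (uses at least one edge). -/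
def Nonemp (π : Trek G v w) : Prop := 0 < π.p ∨ 0 < π.q ∨ π.bid = true

end Trek

/-- `w` is trek reachable from `v`: there is a non-empty trek from `v` to `w`. -/
def tr (G : MixedGraph n) (v w : Fin n) : Prop :=
  ∃ π : Trek G v w, π.Nonemp

/-- `w` is half-trek reachable from `v`. -/
def htr (G : MixedGraph n) (v w : Fin n) : Prop :=
  ∃ π : Trek G v w, π.IsHalfTrek ∧ π.Nonemp

/-- `w` is a descendant of `v` (non-empty directed path from `v` to `w`). -/
def des (G : MixedGraph n) (v w : Fin n) : Prop :=
  Relation.TransGen G.D v w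

/-- The parents of `w`. -/
def pa (G : MixedGraph n) (w : Fin n) : Set (Fin n) := {z | G.D z w}

/-- The siblings of `w`. -/
def sib (G : MixedGraph n) (w : Fin n) : Set (Fin n) := {z | G.B z w}

end MixedGraph

open Matrix MixedGraph MvPowerSeries

/-- Coefficientwise (product) topology on multivariate formal power series. -/
noncomputable instance mvPowerSeriesTop (σ : Type*) : TopologicalSpace (MvPowerSeries σ ℚ) :=
  Pi.topologicalSpace

/-!
Expanding matrix powers, `(Λᵏ)_{uv}` is the sum of the weights of the walks of length `k` from
`u` to `v`, so `A_{uv}` sums the weights of all walks from `u` to `v`, and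
`Σ_{vw} = ∑_{u,z} A_{uv} Ω_{uz} A_{zw}` sums `Ω_{uz}` times the weights of pairs of walks
`v ← ⋯ ← u` and `z → ⋯ → w`, i.e. of treks in the complete graph. All series converge
coefficientwise because a walk of length `k` has weight of order at least `k`. Since `Λ` and `Ω`
vanish off the edges of `G`, the pairs of nonzero weight are exactly the treks of `G`.
-/

def Walk (ι : Type*) : Type _ := Σ p : ℕ, Fin (p + 1) → ι

namespace Walk

variable {ι R : Type*}

def length (W : Walk ι) : ℕ := W.1

def first (W : Walk ι) : ι := W.2 0

def last (W : Walk ι) : ι := W.2 (Fin.last W.1)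

def weight [CommSemiring R] (M : Matrix ι ι R) (W : Walk ι) : R :=
  ∏ i : Fin W.1, M (W.2 i.castSucc) (W.2 i.succ)

def weightBetween [CommSemiring R] [DecidableEq ι] (M : Matrix ι ι R) (a b : ι) (W : Walk ι) : R :=
  if W.first = a ∧ W.last = b then W.weight M else 0

theorem apply_ne_zero_of_weight_ne_zero [CommSemiring R] {M : Matrix ι ι R} {W : Walk ι}
    (h : W.weight M ≠ 0) (i : Fin W.length) : M (W.2 i.castSucc) (W.2 i.succ) ≠ 0 :=
  fun h0 => h (Finset.prod_eq_zero (Finset.mem_univ i) h0)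

theorem finite_setOf_length_le [Finite ι] (N : ℕ) : {W : Walk ι | W.length ≤ N}.Finite :=
  (Set.finite_Iic N).preimage' fun p _ =>
    (Set.finite_range (Sigma.mk p)).subset fun W (hW : W.1 = p) => by
      obtain ⟨_, f⟩ := W
      subst hW
      exact ⟨f, rfl⟩

section PowerSeries

variable {σ : Type*} [CommSemiring R] {M : Matrix ι ι (MvPowerSeries σ R)}

theorem length_le_order_weight (hM : ∀ i j, constantCoeff (M i j) = 0) (W : Walk ι) :
    (W.length : ℕ∞) ≤ (W.weight M).order :=
  calc (W.length : ℕ∞) = ∑ _i : Fin W.1, (1 : ℕ∞) := by simp [length]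
    _ ≤ ∑ i : Fin W.1, (M (W.2 i.castSucc) (W.2 i.succ)).order :=
      Finset.sum_le_sum fun _ _ => one_le_order_iff_constCoeff_eq_zero.2 (hM _ _)
    _ ≤ (W.weight M).order := le_order_prod _ _

theorem finite_setOf_order_weightBetween_le [Finite ι] [DecidableEq ι]
    (hM : ∀ i j, constantCoeff (M i j) = 0) (a b : ι) (N : ℕ) :
    {W : Walk ι | (W.weightBetween M a b).order ≤ N}.Finite := by
  refine (finite_setOf_length_le N).subset fun W hW => ?_
  have hle : (W.weight M).order ≤ (W.weightBetween M a b).order := by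
    unfold weightBetween
    split_ifs <;> simp
  exact_mod_cast (length_le_order_weight hM W).trans (hle.trans hW)

end PowerSeries

end Walk

theorem Matrix.pow_apply_eq_sum_walk_weight {ι R : Type*} [Fintype ι] [DecidableEq ι]
    [CommSemiring R] (M : Matrix ι ι R) (p : ℕ) (a b : ι) :
    (M ^ p) a b = ∑ f : Fin (p + 1) → ι,
      if f 0 = a ∧ f (Fin.last p) = b then Walk.weight M ⟨p, f⟩ else 0 := by
  induction p generalizing a with
  | zero =>
    rw [pow_zero, one_apply, ← (Equiv.funUnique (Fin 1) ι).symm.sum_comp]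
    simp [Walk.weight, ite_and]
  | succ p ih =>
    rw [pow_succ', mul_apply, ← (Fin.consEquiv fun _ => ι).sum_comp, Fintype.sum_prod_type]
    simp only [ih, Finset.mul_sum, Fin.consEquiv_apply, Walk.weight, Fin.prod_univ_succ,
      ← Fin.succ_last, Fin.castSucc_zero, ← Fin.succ_castSucc, Fin.cons_zero, Fin.cons_succ,
      ite_and, mul_ite, mul_zero, Finset.sum_ite_irrel, Finset.sum_const_zero]
    rw [Finset.sum_comm]
    simp only [Finset.sum_ite_eq, Finset.sum_ite_eq', Finset.mem_univ, if_true]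

/-- A trek of the complete graph on `ι` is a pair of walks: `x.1` climbs from the source to the
top, hence is weighted by `Λᵀ`, and `x.2` descends from the top to the target. -/
def trekWeight {ι R : Type*} [CommSemiring R] (Λ Ω : Matrix ι ι R) (x : Walk ι × Walk ι) : R :=
  Ω x.1.last x.2.first * x.1.weight Λᵀ * x.2.weight Λ

namespace MvPowerSeries.WithPiTopology

variable {σ R ι κ : Type*} [TopologicalSpace R]

theorem summable_of_finite_setOf_order_le [Semiring R] {f : ι → MvPowerSeries σ R}
    (hf : ∀ N : ℕ, {i | (f i).order ≤ N}.Finite) : Summable f := by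
  rw [summable_iff_summable_coeff]
  exact fun d => summable_of_hasFiniteSupport <| (hf d.degree).subset fun i hi => order_le hi

theorem t3Space [T3Space R] : T3Space (MvPowerSeries σ R) :=
  inferInstanceAs (T3Space ((σ →₀ ℕ) → R))

attribute [local instance] t3Space

variable [T3Space R]

theorem hasSum_mul_of_finite_setOf_order_le [Semiring R] [IsTopologicalSemiring R]
    {f : ι → MvPowerSeries σ R} {g : κ → MvPowerSeries σ R} {S T : MvPowerSeries σ R}
    (hf : HasSum f S) (hg : HasSum g T)
    (hf' : ∀ N : ℕ, {i | (f i).order ≤ N}.Finite) (hg' : ∀ N : ℕ, {k | (g k).order ≤ N}.Finite) :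
    HasSum (fun x : ι × κ => f x.1 * g x.2) (S * T) :=
  hf.mul hg <| summable_of_finite_setOf_order_le fun N =>
    ((hf' N).prod (hg' N)).subset fun _ hx =>
      have hx : _ ≤ (N : ℕ∞) := le_order_mul.trans hx
      ⟨le_self_add.trans hx, le_add_self.trans hx⟩

variable [CommSemiring R] [IsTopologicalSemiring R] [Fintype ι] [DecidableEq ι]

theorem hasSum_walk_weightBetween {M : Matrix ι ι (MvPowerSeries σ R)}
    (hM : ∀ i j, constantCoeff (M i j) = 0) {a b : ι} {S : MvPowerSeries σ R}
    (hS : HasSum (fun k => (M ^ k) a b) S) : HasSum (Walk.weightBetween M a b) S :=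
  hS.sigma_of_hasSum
    (fun p => by rw [Matrix.pow_apply_eq_sum_walk_weight]; exact hasSum_fintype _)
    (summable_of_finite_setOf_order_le (Walk.finite_setOf_order_weightBetween_le hM a b))

theorem hasSum_trekWeight {Λ : Matrix ι ι (MvPowerSeries σ R)}
    (hΛ : ∀ i j, constantCoeff (Λ i j) = 0) {A : Matrix ι ι (MvPowerSeries σ R)}
    (hA : ∀ i j, HasSum (fun k => (Λ ^ k) i j) (A i j)) (Ω : Matrix ι ι (MvPowerSeries σ R))
    (v w : ι) :
    HasSum (fun x : Walk ι × Walk ι => if x.1.first = v ∧ x.2.last = w then trekWeight Λ Ω x else 0)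
      ((Aᵀ * Ω * A) v w) := by
  have hΛt : ∀ i j, constantCoeff (Λᵀ i j) = 0 := fun i j => hΛ j i
  have hleft (u : ι) : HasSum (Walk.weightBetween Λᵀ v u) (A u v) :=
    hasSum_walk_weightBetween hΛt (by simpa only [← transpose_pow, transpose_apply] using hA u v)
  have hright (z : ι) : HasSum (Walk.weightBetween Λ z w) (A z w) :=
    hasSum_walk_weightBetween hΛ (hA z w)
  have hsum := hasSum_sum (s := Finset.univ) fun (uz : ι × ι) _ =>
    (hasSum_mul_of_finite_setOf_order_le (hleft uz.1) (hright uz.2)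
      (Walk.finite_setOf_order_weightBetween_le hΛt v uz.1)
      (Walk.finite_setOf_order_weightBetween_le hΛ uz.2 w)).mul_left (Ω uz.1 uz.2)
  have hsummand : (fun x : Walk ι × Walk ι =>
      if x.1.first = v ∧ x.2.last = w then trekWeight Λ Ω x else 0) = fun x =>
      ∑ uz : ι × ι, Ω uz.1 uz.2 * (x.1.weightBetween Λᵀ v uz.1 * x.2.weightBetween Λ uz.2 w) := by
    funext x
    by_cases h : x.1.first = v ∧ x.2.last = w
    · simp [Walk.weightBetween, trekWeight, Fintype.sum_prod_type, h, mul_assoc]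
    · rcases not_and_or.1 h with h | h <;> simp [Walk.weightBetween, h]
  have hvalue : (Aᵀ * Ω * A) v w = ∑ uz : ι × ι, Ω uz.1 uz.2 * (A uz.1 v * A uz.2 w) := by
    simp only [mul_apply, transpose_apply, Finset.sum_mul, Fintype.sum_prod_type]
    rw [Finset.sum_comm]
    exact Finset.sum_congr rfl fun _ _ => Finset.sum_congr rfl fun _ _ => by ring
  rw [hsummand, hvalue]
  exact hsum

end MvPowerSeries.WithPiTopology

namespace MixedGraph.Trek

variable {n : ℕ} {G : MixedGraph n} {v w : Fin n}

def toWalks (π : Trek G v w) : Walk (Fin n) × Walk (Fin n) := (⟨π.p, π.L⟩, ⟨π.q, π.R⟩)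

theorem toWalks_injective : Function.Injective (toWalks : Trek G v w → _) := by
  rintro ⟨p, q, L, R, hL, hR, b, hc, hv, hw⟩ ⟨p', q', L', R', hL', hR', b', hc', hv', hw'⟩ h
  obtain ⟨hLeft, hRight⟩ := Prod.mk.inj h
  obtain ⟨rfl, hLL⟩ := Sigma.mk.inj hLeft
  obtain ⟨rfl, hRR⟩ := Sigma.mk.inj hRight
  obtain rfl := eq_of_heq hLL
  obtain rfl := eq_of_heq hRR
  obtain rfl : b = b' := by
    cases b <;> cases b' <;>
      simp only [Bool.false_eq_true, Bool.true_eq_false, if_true, if_false] at hc hc' ⊢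
    · exact G.B_irrefl _ (hc ▸ hc')
    · exact G.B_irrefl _ (hc' ▸ hc)
  rfl

theorem monom_eq_trekWeight_toWalks {R : Type*} [CommSemiring R] (Λ Ω : Matrix (Fin n) (Fin n) R)
    (π : Trek G v w) : π.monom Λ Ω = trekWeight Λ Ω π.toWalks :=
  rfl

theorem exists_toWalks_eq {R : Type*} [CommSemiring R] {Λ Ω : Matrix (Fin n) (Fin n) R}
    (hΛ : ∀ i j, Λ i j ≠ 0 → G.D i j) (hΩ : ∀ i j, Ω i j ≠ 0 → i = j ∨ G.B i j)
    {x : Walk (Fin n) × Walk (Fin n)} (hv : x.1.first = v) (hw : x.2.last = w)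
    (hx : trekWeight Λ Ω x ≠ 0) : ∃ π : Trek G v w, π.toWalks = x := by
  obtain ⟨⟨p, L⟩, ⟨q, R⟩⟩ := x
  have hL (i : Fin p) : G.D (L i.succ) (L i.castSucc) :=
    hΛ _ _ (Walk.apply_ne_zero_of_weight_ne_zero (right_ne_zero_of_mul (left_ne_zero_of_mul hx)) i)
  have hR (i : Fin q) : G.D (R i.castSucc) (R i.succ) :=
    hΛ _ _ (Walk.apply_ne_zero_of_weight_ne_zero (right_ne_zero_of_mul hx) i)
  rcases hΩ _ _ (left_ne_zero_of_mul (left_ne_zero_of_mul hx)) with htop | htop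
  · exact ⟨⟨p, q, L, R, hL, hR, false, htop, hv, hw⟩, rfl⟩
  · exact ⟨⟨p, q, L, R, hL, hR, true, htop, hv, hw⟩, rfl⟩

end MixedGraph.Trek

/-- **The Trek Rule.**  Let `G` be a mixed graph on `n` vertices with
indeterminate matrices `Λ` (supported on the directed edges) and `Ω`
(supported on the bidirected edges and the diagonal), over the formal power
series ring in the indeterminates `λ_{vw}` (left summand) and `ω_{vw}` (right
summand).  If `A` is the formal power series `(I - Λ)⁻¹ = I + ∑_{k ≥ 1} Λᵏ`
(expressed entrywise: `A i j` is the sum of the series `∑_k (Λᵏ) i j`) and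
`Σ = Aᵀ Ω A`, then for all vertices `v, w` the entry `Σ v w` is the sum over
all treks `π` from `v` to `w` of the trek monomial `π(Λ, Ω)`. -/
theorem trek_rule {n : ℕ} (G : MixedGraph n)
    [DecidableRel G.D] [DecidableRel G.B] [DecidableEq (Fin n)]
    (Lam Om : Matrix (Fin n) (Fin n) (MvPowerSeries ((Fin n × Fin n) ⊕ (Fin n × Fin n)) ℚ))
    (hLam : ∀ i j, Lam i j =
      if G.D i j then MvPowerSeries.X (Sum.inl (i, j)) else 0)
    (hOm : ∀ i j, Om i j =
      if i = j ∨ G.B i j then MvPowerSeries.X (Sum.inr (i, j)) else 0)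
    (A : Matrix (Fin n) (Fin n) (MvPowerSeries ((Fin n × Fin n) ⊕ (Fin n × Fin n)) ℚ))
    (hA : ∀ i j, HasSum (fun k : ℕ => (Lam ^ k) i j) (A i j))
    (Sig : Matrix (Fin n) (Fin n) (MvPowerSeries ((Fin n × Fin n) ⊕ (Fin n × Fin n)) ℚ))
    (hSig : Sig = Aᵀ * Om * A) :
    ∀ v w : Fin n,
      HasSum (fun π : Trek G v w => π.monom (fun i j => Lam i j) (fun i j => Om i j))
        (Sig v w) := by
  intro v w
  have hLam0 (i j : Fin n) : constantCoeff (Lam i j) = 0 := by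
    rw [hLam]; split_ifs <;> simp
  have hLamD (i j : Fin n) (h : Lam i j ≠ 0) : G.D i j := by
    by_contra hD; exact h (by rw [hLam, if_neg hD])
  have hOmB (i j : Fin n) (h : Om i j ≠ 0) : i = j ∨ G.B i j := by
    by_contra hB; exact h (by rw [hOm, if_neg hB])
  have hvanish : ∀ x ∉ Set.range (Trek.toWalks (G := G) (v := v) (w := w)),
      (if x.1.first = v ∧ x.2.last = w then trekWeight Lam Om x else 0) = 0 := by
    refine fun x hx => ite_eq_right_iff.2 fun h => ?_
    by_contra hne
    exact hx (Trek.exists_toWalks_eq hLamD hOmB h.1 h.2 hne)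
  have h : HasSum (fun x : Walk (Fin n) × Walk (Fin n) =>
      if x.1.first = v ∧ x.2.last = w then trekWeight Lam Om x else 0) (Sig v w) := by
    rw [hSig]
    exact MvPowerSeries.WithPiTopology.hasSum_trekWeight hLam0 hA Om v w
  exact ((Trek.toWalks_injective.hasSum_iff hvanish).2 h).congr_fun fun π =>
    (π.monom_eq_trekWeight_toWalks Lam Om).trans (if_pos ⟨π.hv, π.hw⟩).symm
end

section
/- Let G = (V,D,B) be a mixed graph and v a vertex with v ∉ des(v) (v is not contained in any non-empty directed cycle through v). Let w → v be a directed edge, and let π be a trek from s to v with s ∉ {v} ∪ des(v) that uses the edge w → v. Then the edge w → v is used only on the right-hand side of π, and it is the last edge of π. -/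
open scoped BigOperators

/-! ### STATEMENT 3: a trek into `v` using an edge `w → v` uses it only as its
final right-hand edge -/

open MixedGraph

private lemma trek_left_des {n : ℕ} {G : MixedGraph n} {v w : Fin n}
    (π : MixedGraph.Trek G v w) :
    ∀ (m : ℕ) (h : m < π.p + 1), 0 < m →
      Relation.TransGen G.D (π.L ⟨m, h⟩) (π.L ⟨0, Nat.succ_pos _⟩) := by
  intro m
  induction m with
  | zero => intro _ h0; exact absurd h0 (lt_irrefl 0)
  | succ k ih =>
    intro h _
    have hk : k < π.p := Nat.lt_of_succ_lt_succ h
    have hstep : G.D (π.L ⟨k + 1, h⟩) (π.L ⟨k, Nat.lt_succ_of_lt hk⟩) := by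
      have := π.hL ⟨k, hk⟩
      simpa [Fin.succ, Fin.castSucc, Fin.castAdd, Fin.castLE] using this
    rcases Nat.eq_zero_or_pos k with hk0 | hk0
    · subst hk0
      exact Relation.TransGen.single hstep
    · exact Relation.TransGen.head hstep (ih _ hk0)

private lemma trek_right_des {n : ℕ} {G : MixedGraph n} {v w : Fin n}
    (π : MixedGraph.Trek G v w) :
    ∀ (k : ℕ) (hk : k < π.q + 1) (m : ℕ) (hm : m < π.q + 1), m < k →
      Relation.TransGen G.D (π.R ⟨m, hm⟩) (π.R ⟨k, hk⟩) := by
  intro k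
  induction k with
  | zero => intro _ m _ h0; exact absurd h0 (Nat.not_lt_zero m)
  | succ j ih =>
    intro hk m hm hmk
    have hj : j < π.q := Nat.lt_of_succ_lt_succ hk
    have hstep : G.D (π.R ⟨j, Nat.lt_succ_of_lt hj⟩) (π.R ⟨j + 1, hk⟩) := by
      have := π.hR ⟨j, hj⟩
      simpa [Fin.succ, Fin.castSucc, Fin.castAdd, Fin.castLE] using this
    rcases Nat.lt_or_ge m j with hmj | hmj
    · exact Relation.TransGen.tail (ih _ m hm hmj) hstep
    · have : m = j := le_antisymm (Nat.lt_succ_iff.mp hmk) hmj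
      subst this
      exact Relation.TransGen.single (by simpa using hstep)

/-- Let `G` be a mixed graph and `v` a vertex with `v ∉ des(v)`.  Let `w → v`
be a directed edge, and let `π` be a trek from `s` to `v`, where
`s ∉ {v} ∪ des(v)`, that uses the edge `w → v`.  Then `w → v` is used only on
the right-hand side of `π` and it is the last edge of `π`. -/
theorem trek_uses_edge_only_as_last {n : ℕ} (G : MixedGraph n) (v w s : Fin n)
    (hvv : ¬ G.des v v) (hwv : G.D w v)
    (hs : s ≠ v ∧ ¬ G.des v s)
    (π : MixedGraph.Trek G s v)
    (huses : π.usesLeft w v ∨ π.usesRight w v) :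
    ¬ π.usesLeft w v ∧
      ∀ i : Fin π.q, π.R i.castSucc = w → π.R i.succ = v → (i : ℕ) + 1 = π.q := by
  constructor
  · rintro ⟨i, -, hiv⟩
    have hi1 : (i : ℕ) < π.p + 1 := Nat.lt_succ_of_lt i.isLt
    have hcast : π.L i.castSucc = π.L ⟨(i : ℕ), hi1⟩ := rfl
    rcases Nat.eq_zero_or_pos (i : ℕ) with h0 | h0
    · have hc : i.castSucc = 0 := Fin.ext h0
      rw [hc, π.hv] at hiv
      exact hs.1 hiv
    · have hdes : Relation.TransGen G.D (π.L ⟨(i : ℕ), hi1⟩) (π.L ⟨0, Nat.succ_pos _⟩) :=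
        trek_left_des π _ hi1 h0
      rw [hcast] at hiv
      rw [hiv] at hdes
      have : π.L ⟨0, Nat.succ_pos _⟩ = s := π.hv
      rw [this] at hdes
      exact absurd hdes hs.2
  · intro i _ hiv
    by_contra hne
    have hlt : (i : ℕ) + 1 < π.q := lt_of_le_of_ne (Nat.succ_le_of_lt i.isLt) hne
    have hsucc : π.R i.succ = π.R ⟨(i : ℕ) + 1, Nat.succ_lt_succ i.isLt⟩ := rfl
    have hdes : Relation.TransGen G.D (π.R ⟨(i : ℕ) + 1, Nat.succ_lt_succ i.isLt⟩)
        (π.R ⟨π.q, Nat.lt_succ_self _⟩) := trek_right_des π _ (Nat.lt_succ_self _) _ _ hlt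
    rw [← hsucc, hiv] at hdes
    have hlast : π.R ⟨π.q, Nat.lt_succ_self _⟩ = v := π.hw
    rw [hlast] at hdes
    exact hvv hdes
end

section
/- Let G = (V,D,B) be a mixed graph, v a vertex, s a source vertex, and w ∈ pa(v) a parent of v such that no trek from s to v uses the edge w → v except as its final edge. Then in the trek-rule expansion, σ_{s w} λ_{w v} equals the sum of the trek monomials of all treks from s to v whose final edge is w → v; consequently σ_{s v} − σ_{s w} λ_{w v} is the sum of trek monomials of all treks from s to v not using the edge w → v at all. -/
open scoped BigOperators

open Matrix MixedGraph MvPowerSeries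

/-! Appending the edge `w → v` on the right is a bijection from the treks `s ⇝ w` onto the treks
`s ⇝ v` whose last edge is `w → v`, and it multiplies trek monomials by `λ_{wv}`; summing gives
`σ_{sw} λ_{wv}`. Under the hypothesis a trek uses `w → v` exactly when it ends with it, so the
treks avoiding the edge are the complement, with sum `σ_{sv} - σ_{sw} λ_{wv}`. -/

namespace MixedGraph.Trek

variable {n : ℕ} {G : MixedGraph n} {s v w a b : Fin n}

theorem ext_of_val {π π' : Trek G s v} (hp : π.p = π'.p) (hq : π.q = π'.q)
    (hL : ∀ (i : Fin (π.p + 1)) (j : Fin (π'.p + 1)), (i : ℕ) = j → π.L i = π'.L j)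
    (hR : ∀ (i : Fin (π.q + 1)) (j : Fin (π'.q + 1)), (i : ℕ) = j → π.R i = π'.R j)
    (hbid : π.bid = π'.bid) : π = π' := by
  cases π
  cases π'
  dsimp only at hp hq hL hR hbid
  subst hp hq hbid
  congr
  · exact funext fun i => hL i i rfl
  · exact funext fun i => hR i i rfl

def EndsWithEdge (π : Trek G s v) (a b : Fin n) : Prop :=
  ∃ i : Fin π.q, (i : ℕ) + 1 = π.q ∧ π.R i.castSucc = a ∧ π.R i.succ = b

theorem endsWithEdge_iff_usesRight {π : Trek G s v}
    (honly : ∀ i : Fin π.q, π.R i.castSucc = a → π.R i.succ = b → (i : ℕ) + 1 = π.q) :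
    π.EndsWithEdge a b ↔ π.usesRight a b :=
  ⟨fun ⟨i, _, hia, hib⟩ => ⟨i, hia, hib⟩,
    fun ⟨i, hia, hib⟩ => ⟨i, honly i hia hib, hia, hib⟩⟩

def snoc (τ : Trek G s w) (hwv : G.D w v) : Trek G s v where
  p := τ.p
  q := τ.q + 1
  L := τ.L
  R := Fin.snoc τ.R v
  hL := τ.hL
  hR := Fin.lastCases (by rw [Fin.succ_last, Fin.snoc_last, Fin.snoc_castSucc, τ.hw]; exact hwv)
    fun i => by rw [Fin.succ_castSucc, Fin.snoc_castSucc, Fin.snoc_castSucc]; exact τ.hR i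
  bid := τ.bid
  hconn := by rw [Fin.snoc_apply_zero]; exact τ.hconn
  hv := τ.hv
  hw := Fin.snoc_last ..

theorem endsWithEdge_snoc (τ : Trek G s w) (hwv : G.D w v) : (τ.snoc hwv).EndsWithEdge w v :=
  ⟨Fin.last τ.q, rfl, by simp [snoc, τ.hw], by simp [snoc]⟩

def dropLast (π : Trek G s v) (h : π.EndsWithEdge w v) : Trek G s w where
  p := π.p
  q := π.q - 1
  L := π.L
  R i := π.R ⟨i, by omega⟩
  hL := π.hL
  hR i := π.hR ⟨i, by omega⟩
  bid := π.bid
  hconn := π.hconn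
  hv := π.hv
  hw := by
    obtain ⟨i, hi, hiw, -⟩ := h
    convert hiw using 2
    exact Fin.ext (by simp only [Fin.val_last, Fin.val_castSucc]; omega)

theorem snoc_R_of_val_eq (τ : Trek G s w) (hwv : G.D w v) (i : Fin ((τ.snoc hwv).q + 1))
    (j : Fin (τ.q + 1)) (hij : (i : ℕ) = j) : (τ.snoc hwv).R i = τ.R j := by
  obtain rfl : i = j.castSucc := Fin.ext hij
  exact Fin.snoc_castSucc (α := fun _ => Fin n) v τ.R j

theorem dropLast_snoc (τ : Trek G s w) (hwv : G.D w v) :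
    (τ.snoc hwv).dropLast (τ.endsWithEdge_snoc hwv) = τ :=
  ext_of_val rfl (Nat.add_sub_cancel τ.q 1) (fun _ _ hij => congrArg τ.L (Fin.ext hij))
    (fun _ j hij => τ.snoc_R_of_val_eq hwv _ j hij) rfl

theorem snoc_dropLast (π : Trek G s v) (h : π.EndsWithEdge w v) (hwv : G.D w v) :
    (π.dropLast h).snoc hwv = π := by
  have hq : 0 < π.q := by obtain ⟨i, -⟩ := h; exact i.pos
  refine ext_of_val rfl (Nat.sub_add_cancel hq) (fun _ _ hij => congrArg π.L (Fin.ext hij))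
    (fun i j hij => ?_) rfl
  have hi : (i : ℕ) ≤ π.q := (Nat.le_of_lt_succ i.isLt).trans_eq (Nat.sub_add_cancel hq)
  rcases hi.lt_or_eq with hlt | heq
  · have hi' : (i : ℕ) < (π.dropLast h).q + 1 := show (i : ℕ) < π.q - 1 + 1 by omega
    exact ((π.dropLast h).snoc_R_of_val_eq hwv i ⟨i, hi'⟩ rfl).trans
      (congrArg π.R (Fin.ext hij))
  · obtain rfl : j = Fin.last _ := Fin.ext (by simp only [Fin.val_last]; omega)
    obtain rfl : i = Fin.last _ := Fin.ext (heq.trans (Nat.sub_add_cancel hq).symm)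
    exact ((π.dropLast h).snoc hwv).hw.trans π.hw.symm

def snocEquiv (hwv : G.D w v) : Trek G s w ≃ {π : Trek G s v // π.EndsWithEdge w v} where
  toFun τ := ⟨τ.snoc hwv, τ.endsWithEdge_snoc hwv⟩
  invFun π := π.1.dropLast π.2
  left_inv τ := τ.dropLast_snoc hwv
  right_inv π := Subtype.ext (π.1.snoc_dropLast π.2 hwv)

theorem monom_snoc {R' : Type*} [CommSemiring R'] (lam om : Fin n → Fin n → R')
    (τ : Trek G s w) (hwv : G.D w v) :
    (τ.snoc hwv).monom lam om = τ.monom lam om * lam w v := by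
  unfold monom snoc
  dsimp only
  rw [Fin.prod_univ_castSucc, ← Fin.castSucc_zero]
  simp only [Fin.succ_castSucc, Fin.succ_last, Fin.snoc_castSucc, Fin.snoc_last, τ.hw]
  ring

theorem hasSum_monom_endsWithEdge {R' : Type*} [CommSemiring R'] [TopologicalSpace R']
    [IsTopologicalSemiring R'] {lam om : Fin n → Fin n → R'} (hwv : G.D w v) {σ : R'}
    (hσ : HasSum (fun τ : Trek G s w => τ.monom lam om) σ) :
    HasSum (fun π : {π : Trek G s v // π.EndsWithEdge w v} => π.1.monom lam om)
      (σ * lam w v) := by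
  have hcomp : (fun π : {π : Trek G s v // π.EndsWithEdge w v} => π.1.monom lam om) ∘
      snocEquiv hwv = fun τ => τ.monom lam om * lam w v :=
    funext fun τ => monom_snoc lam om τ hwv
  rw [← (snocEquiv hwv).hasSum_iff, hcomp]
  exact hσ.mul_right (lam w v)

end MixedGraph.Trek

theorem peel_final_edge_general {n : ℕ} (G : MixedGraph n)
    (lam om : Fin n → Fin n → MvPowerSeries ((Fin n × Fin n) ⊕ (Fin n × Fin n)) ℚ)
    (s v w : Fin n) (hwv : G.D w v)
    (ssw ssv : MvPowerSeries ((Fin n × Fin n) ⊕ (Fin n × Fin n)) ℚ)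
    (hssw : HasSum (fun π : Trek G s w => π.monom lam om) ssw)
    (hssv : HasSum (fun π : Trek G s v => π.monom lam om) ssv)
    (honly : ∀ π : Trek G s v, ¬ π.usesLeft w v ∧
      ∀ i : Fin π.q, π.R i.castSucc = w → π.R i.succ = v → (i : ℕ) + 1 = π.q) :
    HasSum
      (fun π : {π : Trek G s v //
          ∃ i : Fin π.q, (i : ℕ) + 1 = π.q ∧ π.R i.castSucc = w ∧ π.R i.succ = v} =>
        π.1.monom lam om)
      (ssw * lam w v)
    ∧ HasSum
      (fun π : {π : Trek G s v // ¬ (π.usesLeft w v ∨ π.usesRight w v)} =>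
        π.1.monom lam om)
      (ssv - ssw * lam w v) := by
  -- `mvPowerSeriesTop` is definitionally the coefficientwise topology of `WithPiTopology`.
  have : IsTopologicalRing (MvPowerSeries ((Fin n × Fin n) ⊕ (Fin n × Fin n)) ℚ) :=
    WithPiTopology.instIsTopologicalRing _ _
  have hfinal := Trek.hasSum_monom_endsWithEdge hwv hssw
  refine ⟨hfinal, ?_⟩
  have hrest := (hfinal.hasSum_iff_compl (s := {π | π.EndsWithEdge w v})).mp hssv
  have huses (π : Trek G s v) : π.EndsWithEdge w v ↔ π.usesLeft w v ∨ π.usesRight w v :=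
    (Trek.endsWithEdge_iff_usesRight (honly π).2).trans (or_iff_right (honly π).1).symm
  exact (Equiv.subtypeEquivRight fun π => not_congr (huses π)).hasSum_iff.mp hrest

/-- Let `G` be a mixed graph, `v` a vertex, `s` a source vertex and `w` a
parent of `v` such that no trek from `s` to `v` uses the edge `w → v` except as
its final (right-hand) edge.  Then, in the trek-rule expansion,
`σ_{s w} · λ_{w v}` is the sum of the trek monomials of all treks from `s` to
`v` whose final edge is `w → v`, and consequently `σ_{s v} - σ_{s w} · λ_{w v}`
is the sum of the trek monomials of all treks from `s` to `v` not using the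
edge `w → v` at all. -/
theorem peel_final_edge {n : ℕ} (G : MixedGraph n)
    [DecidableRel G.D] [DecidableRel G.B]
    (lam om : Fin n → Fin n → MvPowerSeries ((Fin n × Fin n) ⊕ (Fin n × Fin n)) ℚ)
    (hlam : ∀ i j, lam i j = if G.D i j then MvPowerSeries.X (Sum.inl (i, j)) else 0)
    (hom : ∀ i j, om i j = if i = j ∨ G.B i j then MvPowerSeries.X (Sum.inr (i, j)) else 0)
    (s v w : Fin n) (hwv : G.D w v)
    (ssw ssv : MvPowerSeries ((Fin n × Fin n) ⊕ (Fin n × Fin n)) ℚ)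
    (hssw : HasSum (fun π : Trek G s w => π.monom lam om) ssw)
    (hssv : HasSum (fun π : Trek G s v => π.monom lam om) ssv)
    (honly : ∀ π : Trek G s v, ¬ π.usesLeft w v ∧
      ∀ i : Fin π.q, π.R i.castSucc = w → π.R i.succ = v → (i : ℕ) + 1 = π.q) :
    HasSum
      (fun π : {π : Trek G s v //
          ∃ i : Fin π.q, (i : ℕ) + 1 = π.q ∧ π.R i.castSucc = w ∧ π.R i.succ = v} =>
        π.1.monom lam om)
      (ssw * lam w v)
    ∧ HasSum
      (fun π : {π : Trek G s v // ¬ (π.usesLeft w v ∨ π.usesRight w v)} =>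
        π.1.monom lam om)
      (ssv - ssw * lam w v) :=
  peel_final_edge_general G lam om s v w hwv ssw ssv hssw hssv honly
end

section
/- Let G = (V,D,B) be a mixed graph with Σ = (I−Λ)⁻ᵀ Ω (I−Λ)⁻¹ for (Λ,Ω) ∈ ℝ^D_reg × PD(B). If the vertex v is not half-trek reachable from the vertex y and v ≠ y and v ↔ y ∉ B, then σ_{vy} = Σ_{z ∈ pa(y)} σ_{vz} λ_{zy}. -/
open scoped BigOperators

/-! ### Auxiliary lemmas -/

section Aux

variable {n : ℕ}

/-- Support of a matrix is contained in the reachability relation. -/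
def Supp (G : MixedGraph n) (M : Matrix (Fin n) (Fin n) ℝ) : Prop :=
  ∀ i j, M i j ≠ 0 → Relation.ReflTransGen G.D i j

lemma supp_one (G : MixedGraph n) : Supp G 1 := by
  intro i j h
  by_cases hij : i = j
  · exact hij ▸ Relation.ReflTransGen.refl
  · exact absurd (Matrix.one_apply_ne hij) h

lemma supp_mul {G : MixedGraph n} {M N : Matrix (Fin n) (Fin n) ℝ}
    (hM : Supp G M) (hN : Supp G N) : Supp G (M * N) := by
  intro i j h
  rw [Matrix.mul_apply] at h
  obtain ⟨k, _, hk⟩ := Finset.exists_ne_zero_of_sum_ne_zero h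
  rcases mul_ne_zero_iff.mp hk with ⟨h1, h2⟩
  exact (hM i k h1).trans (hN k j h2)

/-- The set of matrices supported on reachability, as a submodule. -/
def suppSubmodule (G : MixedGraph n) : Submodule ℝ (Matrix (Fin n) (Fin n) ℝ) where
  carrier := {M | Supp G M}
  add_mem' := by
    intro M N hM hN i j h
    by_cases h1 : M i j ≠ 0
    · exact hM i j h1
    · push_neg at h1
      refine hN i j ?_
      intro h2
      exact h (by simp [Matrix.add_apply, h1, h2])
  zero_mem' := by intro i j h; simp at h
  smul_mem' := by
    intro c M hM i j h
    refine hM i j ?_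
    intro h0
    exact h (by simp [Matrix.smul_apply, h0])

lemma supp_inv (G : MixedGraph n) (A : Matrix (Fin n) (Fin n) ℝ)
    (hA : Supp G A) (hu : IsUnit A) : Supp G A⁻¹ := by
  let S := suppSubmodule G
  have hAmem : A ∈ S := hA
  let f : S →ₗ[ℝ] S :=
    { toFun := fun x => ⟨A * (x : Matrix (Fin n) (Fin n) ℝ), supp_mul hA x.2⟩
      map_add' := by intro x y; ext : 1; simp [Matrix.mul_add]
      map_smul' := by intro c x; ext : 1; simp [Matrix.mul_smul] }
  have hinj : Function.Injective f := by
    intro x y hxy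
    have h1 : A * (x : Matrix (Fin n) (Fin n) ℝ) = A * (y : Matrix (Fin n) (Fin n) ℝ) :=
      congrArg Subtype.val hxy
    exact Subtype.ext (hu.mul_left_cancel h1)
  have hsurj : Function.Surjective f := LinearMap.injective_iff_surjective.mp hinj
  obtain ⟨x, hx⟩ := hsurj ⟨1, supp_one G⟩
  have hx1 : A * (x : Matrix (Fin n) (Fin n) ℝ) = 1 := congrArg Subtype.val hx
  rw [Matrix.inv_eq_right_inv hx1]
  exact x.2

/-- A nonempty directed path realizing `TransGen G.D a b`. -/
lemma exists_path {G : MixedGraph n} {a b : Fin n} (h : Relation.TransGen G.D a b) :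
    ∃ q : ℕ, 0 < q ∧ ∃ R : Fin (q + 1) → Fin n,
      R 0 = a ∧ R (Fin.last q) = b ∧ ∀ i : Fin q, G.D (R i.castSucc) (R i.succ) := by
  induction h with
  | single hab =>
      refine ⟨1, one_pos, ![a, _], rfl, rfl, fun i => ?_⟩
      fin_cases i
      simpa using hab
  | @tail b c hab hbc ih =>
      obtain ⟨q, hq, R, h0, hl, hR⟩ := ih
      refine ⟨q + 1, Nat.succ_pos _, Fin.snoc R c, ?_, ?_, ?_⟩
      · rw [show (0 : Fin (q + 2)) = Fin.castSucc 0 from rfl, Fin.snoc_castSucc]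
        exact h0
      · rw [Fin.snoc_last]
      · intro i
        refine Fin.lastCases ?_ ?_ i
        · rw [Fin.succ_last, Fin.snoc_castSucc, Fin.snoc_last, hl]
          exact hbc
        · intro j
          rw [Fin.succ_castSucc, Fin.snoc_castSucc, Fin.snoc_castSucc]
          exact hR j

/-- A directed path from `a` to `b` gives a half-trek. -/
lemma htr_of_path {G : MixedGraph n} {a b : Fin n} (h : Relation.TransGen G.D a b) :
    G.htr a b := by
  obtain ⟨q, hq, R, h0, hl, hR⟩ := exists_path h
  refine ⟨{ p := 0, q := q, L := fun _ => a, R := R, hL := fun i => i.elim0,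
            hR := hR, bid := false, hconn := by simpa using h0.symm,
            hv := rfl, hw := hl }, rfl, Or.inr (Or.inl hq)⟩

/-- A bidirected edge followed by a (possibly empty) directed path gives a half-trek. -/
lemma htr_of_bid_path {G : MixedGraph n} {a k b : Fin n} (hB : G.B a k)
    (h : Relation.ReflTransGen G.D k b) : G.htr a b := by
  rcases Relation.reflTransGen_iff_eq_or_transGen.mp h with rfl | ht
  · exact ⟨{ p := 0, q := 0, L := fun _ => a, R := fun _ => b, hL := fun i => i.elim0,
             hR := fun i => i.elim0, bid := true, hconn := by simpa using hB,
             hv := rfl, hw := rfl }, rfl, Or.inr (Or.inr rfl)⟩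
  · obtain ⟨q, hq, R, h0, hl, hR⟩ := exists_path ht
    refine ⟨{ p := 0, q := q, L := fun _ => a, R := R, hL := fun i => i.elim0,
              hR := hR, bid := true, hconn := ?_, hv := rfl, hw := hl },
            rfl, Or.inr (Or.inr rfl)⟩
    simpa [h0] using hB

end Aux

/-! ### STATEMENT 9: covariance with a non-half-trek-reachable vertex -/

open Matrix MixedGraph

/-- Let `G` be a mixed graph with `Σ = (I - Λ)⁻ᵀ Ω (I - Λ)⁻¹` for
`(Λ, Ω) ∈ ℝ^D_reg × PD(B)`.  If `v` is not half-trek reachable from `y`,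
`v ≠ y`, and `v ↔ y ∉ B`, then `σ_{v y} = ∑_{z ∈ pa(y)} σ_{v z} λ_{z y}`. -/
theorem sigma_eq_sum_parents {n : ℕ} (G : MixedGraph n) [DecidableRel G.D]
    (Lam Om : Matrix (Fin n) (Fin n) ℝ)
    (hLamSupp : ∀ i j, Lam i j ≠ 0 → G.D i j)
    (hreg : IsUnit (1 - Lam))
    (hOmSupp : ∀ i j, i ≠ j → Om i j ≠ 0 → G.B i j)
    (hOmPD : Om.PosDef)
    (Sig : Matrix (Fin n) (Fin n) ℝ)
    (hSig : Sig = (1 - Lam)⁻¹ᵀ * Om * (1 - Lam)⁻¹)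
    (v y : Fin n) (hhtr : ¬ G.htr y v) (hne : v ≠ y) (hnb : ¬ G.B v y) :
    Sig v y = ∑ z ∈ Finset.univ.filter (fun z => G.D z y), Sig v z * Lam z y := by
  have hdet : IsUnit (1 - Lam).det := (Matrix.isUnit_iff_isUnit_det _).mp hreg
  -- support of (1-Λ)⁻¹ is contained in reachability
  have hSA : Supp G (1 - Lam)⁻¹ := by
    refine supp_inv G _ ?_ hreg
    intro i j hij
    by_cases h : i = j
    · exact h ▸ Relation.ReflTransGen.refl
    · have hL : Lam i j ≠ 0 := by
        intro h0
        exact hij (by simp [Matrix.sub_apply, Matrix.one_apply_ne h, h0])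
      exact Relation.ReflTransGen.single (hLamSupp i j hL)
  have key : Sig * (1 - Lam) = (1 - Lam)⁻¹ᵀ * Om := by
    rw [hSig, Matrix.mul_assoc, Matrix.nonsing_inv_mul _ hdet, Matrix.mul_one]
  set T : Matrix (Fin n) (Fin n) ℝ := (1 - Lam)⁻¹ᵀ * Om with hT
  have hentry : (Sig * (1 - Lam)) v y = T v y := by rw [key]
  have hR0 : T v y = 0 := by
    rw [hT]
    rw [Matrix.mul_apply]
    refine Finset.sum_eq_zero fun k _ => ?_
    by_contra hk
    rcases mul_ne_zero_iff.mp hk with ⟨h1, h2⟩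
    rw [Matrix.transpose_apply] at h1
    have hreach : Relation.ReflTransGen G.D k v := hSA k v h1
    by_cases hky : k = y
    · subst hky
      rcases Relation.reflTransGen_iff_eq_or_transGen.mp hreach with heq | ht
      · exact hne heq
      · exact hhtr (htr_of_path ht)
    · exact hhtr (htr_of_bid_path (G.B_symm _ _ (hOmSupp k y hky h2)) hreach)
  rw [Matrix.mul_apply, hR0] at hentry
  have hsum : ∑ z, Sig v z * (1 - Lam) z y
      = Sig v y - ∑ z, Sig v z * Lam z y := by
    simp only [Matrix.sub_apply, mul_sub, Finset.sum_sub_distrib, Matrix.one_apply,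
      mul_ite, mul_one, mul_zero]
    rw [Finset.sum_ite_eq' Finset.univ y (fun z => Sig v z)]
    simp
  have hfilter : ∑ z ∈ Finset.univ.filter (fun z => G.D z y), Sig v z * Lam z y
      = ∑ z, Sig v z * Lam z y := by
    refine Finset.sum_filter_of_ne fun z _ hz => hLamSupp z y ?_
    intro h0
    exact hz (by rw [h0, mul_zero])
  rw [hsum] at hentry
  rw [hfilter]
  linarith
end

section
/- Let G = (V,D,B) be a mixed graph and G̃ its bidirected subdivision, obtained by replacing each bidirected edge i ↔ j by a new vertex v_{(i,j)} together with directed edges v_{(i,j)} → i and v_{(i,j)} → j. Let G*_flow and G̃*_flow be the corresponding unit-capacity flow networks (with duplicated vertex sets and edges as in the t-separation construction). Then for any S, T ⊂ V, the max-flow from S to T′ in G*_flow equals the max-flow from S to T′ in G̃*_flow. -/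
open scoped BigOperators

/-! ### Unit-capacity flow networks -/

open scoped BigOperators

/-- An integral flow of value `r` from the source set `S` to the target set `T`
in the directed graph with edge relation `E`, where every edge and every vertex
has capacity `1`.  Flow enters sources and leaves targets only. -/
structure UnitFlow {V : Type*} [Fintype V] [DecidableEq V]
    (E : V → V → Prop) (S T : Finset V) (r : ℕ) where
  f : V → V → ℕ
  supp : ∀ u v, f u v ≠ 0 → E u v
  edge_cap : ∀ u v, f u v ≤ 1
  vert_cap_in : ∀ v, (∑ u, f u v) ≤ 1
  vert_cap_out : ∀ v, (∑ u, f v u) ≤ 1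
  no_into_src : ∀ s ∈ S, (∑ u, f u s) = 0
  no_outof_tgt : ∀ t ∈ T, (∑ u, f t u) = 0
  conserve : ∀ v, v ∉ S → v ∉ T → (∑ u, f u v) = (∑ u, f v u)
  value : (∑ s ∈ S, ∑ u, f s u) = r

/-- The maximum flow from `S` to `T` in the unit-capacity network `E`. -/
noncomputable def maxFlow {V : Type*} [Fintype V] [DecidableEq V]
    (E : V → V → Prop) (S T : Finset V) : ℕ :=
  sSup {r | Nonempty (UnitFlow E S T r)}

/-- The edge relation of the flow network `G*_flow` associated with a vertex
set `V`, a left directed edge set `DL`, a right directed edge set `DR`, and a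
bidirected edge set `B`: on the doubled vertex set `V ⊕ V` (with `Sum.inl i`
playing the role of `i` and `Sum.inr i` of `i′`) there are edges `i → j` for
`(j, i) ∈ DL`, `i → i′` for all `i`, `i → j′` for `(i, j) ∈ B`, and
`i′ → j′` for `(i, j) ∈ DR`. -/
def flowEdgesLR {V : Type*} (DL DR B : V → V → Prop) :
    (V ⊕ V) → (V ⊕ V) → Prop
  | Sum.inl i, Sum.inl j => DL j i
  | Sum.inl i, Sum.inr j => i = j ∨ B i j
  | Sum.inr i, Sum.inr j => DR i j
  | Sum.inr _, Sum.inl _ => False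

/-- The flow network `G_flow` of a mixed graph, in which both sides use all
directed edges. -/
def MixedGraph.flowEdges {n : ℕ} (G : MixedGraph n) :
    (Fin n ⊕ Fin n) → (Fin n ⊕ Fin n) → Prop :=
  flowEdgesLR G.D G.D G.B

/-! ### STATEMENT 11: bidirected subdivision preserves max-flow -/

/-- The left/right directed edge relation of the bidirected subdivision: each
bidirected edge `i ↔ j` (represented once, with `i < j`) is replaced by a new
vertex `v_{(i,j)}` (the vertex `Sum.inr (i, j)`) with directed edges
`v_{(i,j)} → i` and `v_{(i,j)} → j`, which are added to the given directed
edge set. -/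
def subdivideEdges {n : ℕ} (Dir B : Fin n → Fin n → Prop) :
    (Fin n ⊕ (Fin n × Fin n)) → (Fin n ⊕ (Fin n × Fin n)) → Prop
  | Sum.inl i, Sum.inl j => Dir i j
  | Sum.inr p, Sum.inl k => B p.1 p.2 ∧ p.1 < p.2 ∧ (k = p.1 ∨ k = p.2)
  | _, _ => False

/-!
Shortcutting every path `i → p → p′ → k′` through a new vertex `p` of the subdivision to the
edge `i → k′` (a diagonal edge when `i = k`, a bidirected one otherwise) turns a flow on the
subdivided network into one on the original network. Conversely, an edge `i → k′` with `i ≠ k`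
is routed through the new vertex of `{i, k}`. Since that vertex has capacity one, every pair of
opposite units `i → k′`, `k → i′` is first rerouted along `i → i′` and `k → k′`, which changes
no vertex's in- or outflow. In both directions each old vertex keeps its in- and outflow and each
new vertex carries at most one unit, so flows of every value correspond.
-/

open Finset

section FlowSums

variable {V : Type*} [Fintype V]

def inflow (f : V → V → ℕ) (v : V) : ℕ := ∑ u, f u v

def outflow (f : V → V → ℕ) (v : V) : ℕ := ∑ u, f v u

lemma le_outflow (f : V → V → ℕ) (u v : V) : f u v ≤ outflow f u :=
  single_le_sum (f := f u) (fun _ _ => Nat.zero_le _) (mem_univ v)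

end FlowSums

lemma sum_sum_mul_eq_left {ι κ μ : Type*} [Fintype ι] [Fintype κ] [Fintype μ]
    (a : ι → κ → ℕ) (b : κ → μ → ℕ) (hab : ∀ p, ∑ i, a i p = ∑ k, b p k)
    (hb : ∀ p, ∑ k, b p k ≤ 1) (i : ι) :
    ∑ k, ∑ p, a i p * b p k = ∑ p, a i p := by
  rw [sum_comm]
  refine sum_congr rfl fun p _ => ?_
  have hle : a i p ≤ ∑ k, b p k :=
    (hab p).symm ▸ single_le_sum (f := fun i => a i p) (fun _ _ => Nat.zero_le _) (mem_univ i)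
  rw [← mul_sum]
  have := hb p
  interval_cases h : ∑ k, b p k <;> simp_all

lemma sum_sum_mul_eq_right {ι κ μ : Type*} [Fintype ι] [Fintype κ] [Fintype μ]
    (a : ι → κ → ℕ) (b : κ → μ → ℕ) (hab : ∀ p, ∑ i, a i p = ∑ k, b p k)
    (hb : ∀ p, ∑ k, b p k ≤ 1) (k : μ) :
    ∑ i, ∑ p, a i p * b p k = ∑ p, b p k := by
  simpa only [mul_comm] using
    sum_sum_mul_eq_left (fun k p => b p k) (fun p i => a i p) (fun p => (hab p).symm)
      (fun p => (hab p).trans_le (hb p)) k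

namespace UnitFlow

variable {V V' : Type*} [Fintype V] [DecidableEq V] [Fintype V'] [DecidableEq V']
  {E : V → V → Prop} {S T : Finset V} {r : ℕ}

lemma apply_eq_zero (F : UnitFlow E S T r) {u v : V} (h : ¬ E u v) : F.f u v = 0 :=
  not_ne_iff.mp (mt (F.supp u v) h)

def ofVertexSums (F : UnitFlow E S T r) {E' : V' → V' → Prop} {S' T' : Finset V'}
    (g : V' → V' → ℕ) (supp : ∀ u v, g u v ≠ 0 → E' u v)
    (vertex : ∀ w, (∃ v, inflow g w = inflow F.f v ∧ outflow g w = outflow F.f v ∧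
        (w ∈ S' ↔ v ∈ S) ∧ (w ∈ T' ↔ v ∈ T)) ∨
      (w ∉ S' ∧ w ∉ T' ∧ inflow g w = outflow g w ∧ outflow g w ≤ 1))
    (value : ∑ s ∈ S', outflow g s = ∑ s ∈ S, outflow F.f s) :
    UnitFlow E' S' T' r where
  f := g
  supp := supp
  edge_cap u v := by
    refine (le_outflow g u v).trans ?_
    rcases vertex u with ⟨x, -, hout, -⟩ | ⟨-, -, -, hle⟩
    · exact hout.trans_le (F.vert_cap_out x)
    · exact hle
  vert_cap_in w := by
    rcases vertex w with ⟨v, hin, -⟩ | ⟨-, -, hbal, hle⟩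
    · exact hin.trans_le (F.vert_cap_in v)
    · exact hbal.trans_le hle
  vert_cap_out w := by
    rcases vertex w with ⟨v, -, hout, -⟩ | ⟨-, -, -, hle⟩
    · exact hout.trans_le (F.vert_cap_out v)
    · exact hle
  no_into_src w hw := by
    rcases vertex w with ⟨v, hin, -, hS, -⟩ | ⟨hS, -⟩
    · exact hin.trans (F.no_into_src v (hS.mp hw))
    · exact absurd hw hS
  no_outof_tgt w hw := by
    rcases vertex w with ⟨v, -, hout, -, hT⟩ | ⟨-, hT, -⟩
    · exact hout.trans (F.no_outof_tgt v (hT.mp hw))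
    · exact absurd hw hT
  conserve w hwS hwT := by
    rcases vertex w with ⟨v, hin, hout, hS, hT⟩ | ⟨-, -, hbal, -⟩
    · exact hin.trans ((F.conserve v (hS.not.mp hwS) (hT.not.mp hwT)).trans hout.symm)
    · exact hbal
  value := value.trans F.value

end UnitFlow

section Uncross

variable {V : Type*} [Fintype V] [DecidableEq V]

/-- Every 2-cycle `b i k = b k i = 1` (`i ≠ k`) of a 0/1 matrix is replaced by the two
diagonal entries `i i` and `k k`. -/
def uncross (b : V → V → ℕ) (i k : V) : ℕ :=
  b i k - b i k * b k i + if i = k then ∑ j, b i j * b j i else 0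

variable {b : V → V → ℕ}

lemma sum_uncross_right (hb : ∀ i k, b i k ≤ 1) (i : V) :
    ∑ k, uncross b i k = ∑ k, b i k := by
  have hle : ∀ k, b i k * b k i ≤ b i k := fun k =>
    mul_le_of_le_one_right (Nat.zero_le _) (hb k i)
  have hsum : ∑ k, b i k * b k i ≤ ∑ k, b i k := sum_le_sum fun k _ => hle k
  simp only [uncross]
  rw [sum_add_distrib, sum_tsub_distrib _ fun k _ => hle k, sum_ite_eq]
  simp only [mem_univ, if_true]
  omega

lemma sum_uncross_left (hb : ∀ i k, b i k ≤ 1) (k : V) :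
    ∑ i, uncross b i k = ∑ i, b i k := by
  have hle : ∀ i, b i k * b k i ≤ b i k := fun i =>
    mul_le_of_le_one_right (Nat.zero_le _) (hb k i)
  have hsum : ∑ i, b i k * b k i ≤ ∑ i, b i k := sum_le_sum fun i _ => hle i
  have hsymm : ∑ j, b k j * b j k = ∑ i, b i k * b k i :=
    sum_congr rfl fun j _ => mul_comm _ _
  simp only [uncross]
  rw [sum_add_distrib, sum_tsub_distrib _ fun i _ => hle i, sum_ite_eq']
  simp only [mem_univ, if_true]
  omega

lemma uncross_le_of_ne {i k : V} (h : i ≠ k) : uncross b i k ≤ b i k := by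
  simp [uncross, h]

lemma uncross_mul_uncross_swap (hb : ∀ i k, b i k ≤ 1) {i k : V} (h : i ≠ k) :
    uncross b i k * uncross b k i = 0 := by
  have hik := hb i k
  have hki := hb k i
  simp only [uncross, h, h.symm, if_false, add_zero]
  interval_cases b i k <;> interval_cases b k i <;> rfl

end Uncross

section UncrossFlow

variable {V : Type*} [Fintype V] [DecidableEq V] {DL DR B : V → V → Prop}
  {S T : Finset (V ⊕ V)} {r : ℕ}

def crossBlock (f : V ⊕ V → V ⊕ V → ℕ) (i k : V) : ℕ := f (Sum.inl i) (Sum.inr k)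

def uncrossFlow (f : V ⊕ V → V ⊕ V → ℕ) : V ⊕ V → V ⊕ V → ℕ
  | Sum.inl i, Sum.inr k => uncross (crossBlock f) i k
  | u, v => f u v

lemma crossBlock_le_one (F : UnitFlow (flowEdgesLR DL DR B) S T r) (i k : V) :
    crossBlock F.f i k ≤ 1 :=
  F.edge_cap _ _

lemma inflow_uncrossFlow (F : UnitFlow (flowEdgesLR DL DR B) S T r) (w : V ⊕ V) :
    inflow (uncrossFlow F.f) w = inflow F.f w := by
  cases w with
  | inl j => simp [inflow, Fintype.sum_sum_type, uncrossFlow]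
  | inr k =>
    simpa [inflow, Fintype.sum_sum_type, uncrossFlow, crossBlock] using
      sum_uncross_left (crossBlock_le_one F) k

lemma outflow_uncrossFlow (F : UnitFlow (flowEdgesLR DL DR B) S T r) (w : V ⊕ V) :
    outflow (uncrossFlow F.f) w = outflow F.f w := by
  cases w with
  | inl i =>
    simpa [outflow, Fintype.sum_sum_type, uncrossFlow, crossBlock] using
      sum_uncross_right (crossBlock_le_one F) i
  | inr j => simp [outflow, Fintype.sum_sum_type, uncrossFlow]

namespace UnitFlow

lemma apply_inr_inl (F : UnitFlow (flowEdgesLR DL DR B) S T r) (i j : V) :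
    F.f (Sum.inr i) (Sum.inl j) = 0 :=
  F.apply_eq_zero id

def uncross (F : UnitFlow (flowEdgesLR DL DR B) S T r) :
    UnitFlow (flowEdgesLR DL DR B) S T r :=
  F.ofVertexSums (uncrossFlow F.f)
    (by
      rintro (i | i) (k | k) h
      · exact F.supp _ _ h
      · by_cases hik : i = k
        · exact Or.inl hik
        · exact F.supp _ _ (Nat.pos_iff_ne_zero.mp
            ((Nat.pos_of_ne_zero h).trans_le (uncross_le_of_ne hik)))
      · exact F.supp _ _ h
      · exact F.supp _ _ h)
    (fun w => Or.inl ⟨w, inflow_uncrossFlow F w, outflow_uncrossFlow F w, Iff.rfl, Iff.rfl⟩)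
    (sum_congr rfl fun s _ => outflow_uncrossFlow F s)

lemma uncross_crossBlock_mul_swap (F : UnitFlow (flowEdgesLR DL DR B) S T r) {i k : V}
    (h : i ≠ k) : crossBlock F.uncross.f i k * crossBlock F.uncross.f k i = 0 :=
  uncross_mul_uncross_swap (crossBlock_le_one F) h

end UnitFlow

end UncrossFlow

abbrev subdivisionNetwork {n : ℕ} (DL DR B : Fin n → Fin n → Prop) :
    (Fin n ⊕ (Fin n × Fin n)) ⊕ (Fin n ⊕ (Fin n × Fin n)) →
      (Fin n ⊕ (Fin n × Fin n)) ⊕ (Fin n ⊕ (Fin n × Fin n)) → Prop :=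
  flowEdgesLR (subdivideEdges DL B) (subdivideEdges DR B) (fun _ _ => False)

section SubdivisionLift

variable {n : ℕ}

def edgeVertex (i k : Fin n) : Fin n × Fin n := (min i k, max i k)

lemma edgeVertex_eq {i k : Fin n} {p : Fin n × Fin n} (h : i ≠ k) (hp : edgeVertex i k = p) :
    p.1 < p.2 ∧ ((i, k) = p ∨ (k, i) = p) := by
  subst hp
  rcases h.lt_or_gt with h | h
  · simp [edgeVertex, h, h.le]
  · simp [edgeVertex, h, h.le]

def throughVertex (c : Fin n → Fin n → ℕ) (p : Fin n × Fin n) (i k : Fin n) : ℕ :=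
  if i ≠ k ∧ edgeVertex i k = p then c i k else 0

def newVertexFlow (c : Fin n → Fin n → ℕ) (p : Fin n × Fin n) : ℕ :=
  ∑ i, ∑ k, throughVertex c p i k

lemma sum_throughVertex (c : Fin n → Fin n → ℕ) (i k : Fin n) :
    ∑ p, throughVertex c p i k = if i = k then 0 else c i k := by
  by_cases h : i = k <;> simp [throughVertex, h]

lemma ne_zero_of_throughVertex_ne_zero {c : Fin n → Fin n → ℕ} {p : Fin n × Fin n}
    {i k : Fin n} (h : throughVertex c p i k ≠ 0) :
    i ≠ k ∧ edgeVertex i k = p ∧ c i k ≠ 0 := by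
  unfold throughVertex at h
  split_ifs at h with hik
  · exact ⟨hik.1, hik.2, h⟩
  · exact absurd rfl h

lemma newVertexFlow_le_one {c : Fin n → Fin n → ℕ} (hc : ∀ i k, c i k ≤ 1)
    (hcross : ∀ i k, i ≠ k → c i k * c k i = 0) (p : Fin n × Fin n) :
    newVertexFlow c p ≤ 1 := by
  rw [newVertexFlow, ← Fintype.sum_prod_type']
  by_cases hp : p.1 < p.2
  · have hswap : p ≠ p.swap := fun h => hp.ne (congrArg Prod.fst h)
    rw [← sum_subset (subset_univ {p, p.swap}), sum_pair hswap]
    · have h12 : throughVertex c p p.1 p.2 ≤ c p.1 p.2 := by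
        unfold throughVertex; split_ifs <;> simp
      have h21 : throughVertex c p p.2 p.1 ≤ c p.2 p.1 := by
        unfold throughVertex; split_ifs <;> simp
      have := hcross p.1 p.2 hp.ne
      have := hc p.1 p.2
      have := hc p.2 p.1
      simp only [Prod.fst_swap, Prod.snd_swap]
      rcases Nat.mul_eq_zero.mp ‹c p.1 p.2 * c p.2 p.1 = 0› with h | h <;> omega
    · rintro ⟨i, k⟩ - hq
      by_contra hne
      obtain ⟨hik, hp', -⟩ := ne_zero_of_throughVertex_ne_zero hne
      rcases (edgeVertex_eq hik hp').2 with h | h <;> subst h <;> simp at hq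
  · rw [sum_eq_zero fun q _ => ?_]
    · exact zero_le_one
    by_contra hne
    obtain ⟨hik, hp', -⟩ := ne_zero_of_throughVertex_ne_zero hne
    exact hp (edgeVertex_eq hik hp').1

lemma sum_throughVertex_add_diag_left (c : Fin n → Fin n → ℕ) (i : Fin n) :
    ∑ p, ∑ k, throughVertex c p i k + ∑ k, (if i = k then c i k else 0) = ∑ k, c i k := by
  rw [sum_comm, ← sum_add_distrib]
  refine sum_congr rfl fun k _ => ?_
  rw [sum_throughVertex]
  split_ifs <;> simp

lemma sum_throughVertex_add_diag_right (c : Fin n → Fin n → ℕ) (k : Fin n) :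
    ∑ p, ∑ i, throughVertex c p i k + ∑ i, (if i = k then c i k else 0) = ∑ i, c i k := by
  rw [sum_comm, ← sum_add_distrib]
  refine sum_congr rfl fun i _ => ?_
  rw [sum_throughVertex]
  split_ifs <;> simp

variable {DL DR B : Fin n → Fin n → Prop} {S T : Finset (Fin n)} {r : ℕ}

/-- The edge `i → k′` of the unsubdivided network becomes `i → i′` if `i = k` and the path
`i → p → p′ → k′` through `p = edgeVertex i k` otherwise. -/
def subdivisionLift (f : Fin n ⊕ Fin n → Fin n ⊕ Fin n → ℕ) :
    (Fin n ⊕ (Fin n × Fin n)) ⊕ (Fin n ⊕ (Fin n × Fin n)) →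
      (Fin n ⊕ (Fin n × Fin n)) ⊕ (Fin n ⊕ (Fin n × Fin n)) → ℕ
  | .inl (.inl i), .inl (.inl j) => f (.inl i) (.inl j)
  | .inl (.inl i), .inl (.inr p) => ∑ k, throughVertex (crossBlock f) p i k
  | .inl (.inl i), .inr (.inl k) => if i = k then crossBlock f i k else 0
  | .inl (.inr p), .inr (.inr q) =>
      if p = q then newVertexFlow (crossBlock f) p else 0
  | .inr (.inr p), .inr (.inl k) => ∑ i, throughVertex (crossBlock f) p i k
  | .inr (.inl i), .inr (.inl j) => f (.inr i) (.inr j)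
  | _, _ => 0

lemma inflow_subdivisionLift_inl_inr (f : Fin n ⊕ Fin n → Fin n ⊕ Fin n → ℕ)
    (p : Fin n × Fin n) :
    inflow (subdivisionLift f) (.inl (.inr p)) = newVertexFlow (crossBlock f) p := by
  simp [inflow, Fintype.sum_sum_type, subdivisionLift, newVertexFlow]

lemma outflow_subdivisionLift_inl_inr (f : Fin n ⊕ Fin n → Fin n ⊕ Fin n → ℕ)
    (p : Fin n × Fin n) :
    outflow (subdivisionLift f) (.inl (.inr p)) = newVertexFlow (crossBlock f) p := by
  simp [outflow, Fintype.sum_sum_type, subdivisionLift, newVertexFlow]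

lemma inflow_subdivisionLift_inr_inr (f : Fin n ⊕ Fin n → Fin n ⊕ Fin n → ℕ)
    (p : Fin n × Fin n) :
    inflow (subdivisionLift f) (.inr (.inr p)) = newVertexFlow (crossBlock f) p := by
  simp [inflow, Fintype.sum_sum_type, subdivisionLift, newVertexFlow]

lemma outflow_subdivisionLift_inr_inr (f : Fin n ⊕ Fin n → Fin n ⊕ Fin n → ℕ)
    (p : Fin n × Fin n) :
    outflow (subdivisionLift f) (.inr (.inr p)) = newVertexFlow (crossBlock f) p := by
  simp only [outflow, Fintype.sum_sum_type, subdivisionLift, sum_const_zero, zero_add, add_zero]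
  exact sum_comm

variable (F : UnitFlow (flowEdgesLR DL DR B) (S.image Sum.inl) (T.image Sum.inr) r)

lemma inflow_subdivisionLift_inl_inl (j : Fin n) :
    inflow (subdivisionLift F.f) (.inl (.inl j)) = inflow F.f (.inl j) := by
  simp [inflow, Fintype.sum_sum_type, subdivisionLift, F.apply_inr_inl]

lemma outflow_subdivisionLift_inl_inl (i : Fin n) :
    outflow (subdivisionLift F.f) (.inl (.inl i)) = outflow F.f (.inl i) := by
  simp only [outflow, Fintype.sum_sum_type, subdivisionLift, sum_const_zero, add_zero]
  have := sum_throughVertex_add_diag_left (crossBlock F.f) i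
  simp only [crossBlock] at this ⊢
  omega

lemma inflow_subdivisionLift_inr_inl (k : Fin n) :
    inflow (subdivisionLift F.f) (.inr (.inl k)) = inflow F.f (.inr k) := by
  simp only [inflow, Fintype.sum_sum_type, subdivisionLift, sum_const_zero, add_zero]
  have := sum_throughVertex_add_diag_right (crossBlock F.f) k
  simp only [crossBlock] at this ⊢
  omega

lemma outflow_subdivisionLift_inr_inl (j : Fin n) :
    outflow (subdivisionLift F.f) (.inr (.inl j)) = outflow F.f (.inr j) := by
  simp [outflow, Fintype.sum_sum_type, subdivisionLift, F.apply_inr_inl]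

lemma subdivideEdges_of_throughVertex_ne_zero (hB : ∀ i j, B i j → B j i)
    {p : Fin n × Fin n} {i k : Fin n} (h : throughVertex (crossBlock F.f) p i k ≠ 0) :
    B p.1 p.2 ∧ p.1 < p.2 ∧ (i = p.1 ∨ i = p.2) ∧ (k = p.1 ∨ k = p.2) := by
  obtain ⟨hik, hp, hc⟩ := ne_zero_of_throughVertex_ne_zero h
  have hBik : B i k := (F.supp _ _ hc).resolve_left hik
  obtain ⟨hlt, rfl | rfl⟩ := edgeVertex_eq hik hp
  · exact ⟨hBik, hlt, Or.inl rfl, Or.inr rfl⟩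
  · exact ⟨hB _ _ hBik, hlt, Or.inr rfl, Or.inl rfl⟩

namespace UnitFlow

/-- Uncrossedness of `F` is what keeps the flow through each new vertex at most one. -/
def liftSubdivision (hB : ∀ i j, B i j → B j i)
    (hcross : ∀ i k, i ≠ k → crossBlock F.f i k * crossBlock F.f k i = 0) :
    UnitFlow (subdivisionNetwork DL DR B)
      (S.image fun i => .inl (.inl i)) (T.image fun t => .inr (.inl t)) r :=
  F.ofVertexSums (subdivisionLift F.f)
    (by
      rintro ((i | p) | (i | p)) ((j | q) | (j | q)) h <;>
        simp only [subdivisionLift, ne_eq, not_true_eq_false] at h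
      · exact F.supp _ _ h
      · obtain ⟨k, -, hk⟩ := exists_ne_zero_of_sum_ne_zero h
        obtain ⟨hBq, hlt, hi, -⟩ := subdivideEdges_of_throughVertex_ne_zero F hB hk
        exact ⟨hBq, hlt, hi⟩
      · by_cases hij : i = j
        · exact Or.inl (congrArg _ hij)
        · simp [hij] at h
      · by_cases hpq : p = q
        · exact Or.inl (congrArg _ hpq)
        · simp [hpq] at h
      · exact F.supp _ _ h
      · obtain ⟨i, -, hi⟩ := exists_ne_zero_of_sum_ne_zero h
        obtain ⟨hBp, hlt, -, hj⟩ := subdivideEdges_of_throughVertex_ne_zero F hB hi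
        exact ⟨hBp, hlt, hj⟩)
    (by
      rintro ((i | p) | (k | p))
      · exact Or.inl ⟨.inl i, inflow_subdivisionLift_inl_inl F i,
          outflow_subdivisionLift_inl_inl F i, by simp, by simp⟩
      · refine Or.inr ⟨by simp, by simp, ?_, ?_⟩
        · rw [inflow_subdivisionLift_inl_inr, outflow_subdivisionLift_inl_inr]
        · rw [outflow_subdivisionLift_inl_inr]
          exact newVertexFlow_le_one (crossBlock_le_one F) hcross p
      · exact Or.inl ⟨.inr k, inflow_subdivisionLift_inr_inl F k,
          outflow_subdivisionLift_inr_inl F k, by simp, by simp⟩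
      · refine Or.inr ⟨by simp, by simp, ?_, ?_⟩
        · rw [inflow_subdivisionLift_inr_inr, outflow_subdivisionLift_inr_inr]
        · rw [outflow_subdivisionLift_inr_inr]
          exact newVertexFlow_le_one (crossBlock_le_one F) hcross p)
    (by
      rw [sum_image (by simp), sum_image (by simp)]
      exact sum_congr rfl fun s _ => outflow_subdivisionLift_inl_inl F s)

end UnitFlow

end SubdivisionLift

section SubdivisionContract

variable {n : ℕ} {DL DR B : Fin n → Fin n → Prop} {S T : Finset (Fin n)} {r : ℕ}

def intoNewVertex (f : (Fin n ⊕ (Fin n × Fin n)) ⊕ (Fin n ⊕ (Fin n × Fin n)) →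
    (Fin n ⊕ (Fin n × Fin n)) ⊕ (Fin n ⊕ (Fin n × Fin n)) → ℕ) (i : Fin n)
    (p : Fin n × Fin n) : ℕ :=
  f (.inl (.inl i)) (.inl (.inr p))

def outOfNewVertex (f : (Fin n ⊕ (Fin n × Fin n)) ⊕ (Fin n ⊕ (Fin n × Fin n)) →
    (Fin n ⊕ (Fin n × Fin n)) ⊕ (Fin n ⊕ (Fin n × Fin n)) → ℕ) (p : Fin n × Fin n)
    (k : Fin n) : ℕ :=
  f (.inr (.inr p)) (.inr (.inl k))

/-- Each path `i → p → p′ → k′` through a new vertex becomes the edge `i → k′`. -/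
def subdivisionContract (f : (Fin n ⊕ (Fin n × Fin n)) ⊕ (Fin n ⊕ (Fin n × Fin n)) →
    (Fin n ⊕ (Fin n × Fin n)) ⊕ (Fin n ⊕ (Fin n × Fin n)) → ℕ) :
    Fin n ⊕ Fin n → Fin n ⊕ Fin n → ℕ
  | .inl i, .inl j => f (.inl (.inl i)) (.inl (.inl j))
  | .inl i, .inr k =>
      f (.inl (.inl i)) (.inr (.inl k)) + ∑ p, intoNewVertex f i p * outOfNewVertex f p k
  | .inr i, .inr j => f (.inr (.inl i)) (.inr (.inl j))
  | .inr _, .inl _ => 0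

namespace UnitFlow

variable (G : UnitFlow (subdivisionNetwork DL DR B)
  (S.image fun i => .inl (.inl i)) (T.image fun t => .inr (.inl t)) r)

lemma apply_inl_inr_inl (p : Fin n × Fin n) (w : Fin n ⊕ (Fin n × Fin n)) :
    G.f (.inl (.inr p)) (.inl w) = 0 :=
  G.apply_eq_zero (by cases w <;> exact id)

lemma apply_inl_inr_inr_inl (p : Fin n × Fin n) (k : Fin n) :
    G.f (.inl (.inr p)) (.inr (.inl k)) = 0 :=
  G.apply_eq_zero (by simp [flowEdgesLR])

lemma apply_inl_inl_inr_inr (i : Fin n) (p : Fin n × Fin n) :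
    G.f (.inl (.inl i)) (.inr (.inr p)) = 0 :=
  G.apply_eq_zero (by simp [flowEdgesLR])

lemma apply_inr_inr_inr (u : Fin n ⊕ (Fin n × Fin n)) (p : Fin n × Fin n) :
    G.f (.inr u) (.inr (.inr p)) = 0 :=
  G.apply_eq_zero (by cases u <;> exact id)

lemma apply_inl_inr_inr_inr_of_ne {p q : Fin n × Fin n} (h : p ≠ q) :
    G.f (.inl (.inr p)) (.inr (.inr q)) = 0 :=
  G.apply_eq_zero (by simp [flowEdgesLR, h])

/-- Conservation at `p` and `p′`, whose only connection is the edge `p → p′`. -/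
lemma sum_intoNewVertex_eq_sum_outOfNewVertex (p : Fin n × Fin n) :
    ∑ i, intoNewVertex G.f i p = ∑ k, outOfNewVertex G.f p k := by
  have hp := G.conserve (.inl (.inr p)) (by simp) (by simp)
  have hp' := G.conserve (.inr (.inr p)) (by simp) (by simp)
  simp only [Fintype.sum_sum_type, apply_inl_inr_inl, apply_inr_inl, apply_inl_inr_inr_inl,
    apply_inl_inl_inr_inr, apply_inr_inr_inr, sum_const_zero, add_zero, zero_add] at hp hp'
  rw [sum_eq_single p (fun q _ hq => G.apply_inl_inr_inr_inr_of_ne hq.symm) (by simp)] at hp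
  rw [sum_eq_single p (fun q _ hq => G.apply_inl_inr_inr_inr_of_ne hq) (by simp)] at hp'
  exact hp.trans hp'

lemma sum_outOfNewVertex_le_one (p : Fin n × Fin n) : ∑ k, outOfNewVertex G.f p k ≤ 1 := by
  have h := G.vert_cap_out (.inr (.inr p))
  simp only [Fintype.sum_sum_type, apply_inr_inl, apply_inr_inr_inr, sum_const_zero,
    zero_add, add_zero] at h
  exact h

lemma inflow_subdivisionContract_inl (j : Fin n) :
    inflow (subdivisionContract G.f) (.inl j) = inflow G.f (.inl (.inl j)) := by
  simp only [inflow, Fintype.sum_sum_type, subdivisionContract, apply_inl_inr_inl, apply_inr_inl,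
    sum_const_zero, add_zero]

lemma outflow_subdivisionContract_inl (i : Fin n) :
    outflow (subdivisionContract G.f) (.inl i) = outflow G.f (.inl (.inl i)) := by
  have := sum_sum_mul_eq_left _ _ G.sum_intoNewVertex_eq_sum_outOfNewVertex
    G.sum_outOfNewVertex_le_one i
  simp only [outflow, Fintype.sum_sum_type, subdivisionContract, sum_add_distrib,
    apply_inl_inl_inr_inr, sum_const_zero, add_zero, this]
  simp only [intoNewVertex]
  omega

lemma inflow_subdivisionContract_inr (k : Fin n) :
    inflow (subdivisionContract G.f) (.inr k) = inflow G.f (.inr (.inl k)) := by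
  have := sum_sum_mul_eq_right _ _ G.sum_intoNewVertex_eq_sum_outOfNewVertex
    G.sum_outOfNewVertex_le_one k
  simp only [inflow, Fintype.sum_sum_type, subdivisionContract, sum_add_distrib,
    apply_inl_inr_inr_inl, sum_const_zero, add_zero, this]
  simp only [outOfNewVertex]
  omega

lemma outflow_subdivisionContract_inr (j : Fin n) :
    outflow (subdivisionContract G.f) (.inr j) = outflow G.f (.inr (.inl j)) := by
  simp only [outflow, Fintype.sum_sum_type, subdivisionContract, apply_inr_inl,
    apply_inr_inr_inr, sum_const_zero, add_zero, zero_add]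

end UnitFlow

end SubdivisionContract

namespace UnitFlow

variable {n : ℕ} {DL DR B : Fin n → Fin n → Prop} {S T : Finset (Fin n)} {r : ℕ}

def contractSubdivision (hB : ∀ i j, B i j → B j i)
    (G : UnitFlow (subdivisionNetwork DL DR B)
      (S.image fun i => .inl (.inl i)) (T.image fun t => .inr (.inl t)) r) :
    UnitFlow (flowEdgesLR DL DR B) (S.image Sum.inl) (T.image Sum.inr) r :=
  G.ofVertexSums (subdivisionContract G.f)
    (by
      rintro (i | i) (k | k) h <;> simp only [subdivisionContract] at h
      · exact G.supp _ _ h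
      · by_cases hdiag : G.f (.inl (.inl i)) (.inr (.inl k)) = 0
        · rw [hdiag, zero_add] at h
          obtain ⟨p, -, hp⟩ := exists_ne_zero_of_sum_ne_zero h
          obtain ⟨hBp, -, hi⟩ := G.supp _ _ (left_ne_zero_of_mul hp)
          obtain ⟨-, -, hk⟩ := G.supp _ _ (right_ne_zero_of_mul hp)
          rcases hi with rfl | rfl <;> rcases hk with rfl | rfl
          · exact Or.inl rfl
          · exact Or.inr hBp
          · exact Or.inr (hB _ _ hBp)
          · exact Or.inl rfl
        · exact Or.inl (Sum.inl_injective ((G.supp _ _ hdiag).resolve_right id))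
      · exact absurd rfl h
      · exact G.supp _ _ h)
    (by
      rintro (i | k)
      · exact Or.inl ⟨.inl (.inl i), G.inflow_subdivisionContract_inl i,
          G.outflow_subdivisionContract_inl i, by simp, by simp⟩
      · exact Or.inl ⟨.inr (.inl k), G.inflow_subdivisionContract_inr k,
          G.outflow_subdivisionContract_inr k, by simp, by simp⟩)
    (by
      rw [sum_image (by simp), sum_image (by simp)]
      exact sum_congr rfl fun s _ => G.outflow_subdivisionContract_inl s)

end UnitFlow

/-- **Bidirected subdivision preserves max-flow.**  Let `G` be a mixed graph
(with distinguished left and right directed edge sets `DL`, `DR` and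
bidirected edges `B`) and let `G̃` be its bidirected subdivision.  Then for any
`S, T ⊂ V`, the max-flow from `S` to `T′` in the flow network `G*_flow`
equals the max-flow from `S` to `T′` in the flow network `G̃*_flow`. -/
theorem subdivision_maxFlow_eq {n : ℕ} (DL DR B : Fin n → Fin n → Prop)
    (hB : ∀ i j, B i j → B j i)
    (S T : Finset (Fin n)) :
    maxFlow (flowEdgesLR DL DR B) (S.image Sum.inl) (T.image Sum.inr) =
      maxFlow
        (flowEdgesLR (subdivideEdges DL B) (subdivideEdges DR B)
          (fun _ _ => False))
        (S.image (fun i => Sum.inl (Sum.inl i)))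
        (T.image (fun t => Sum.inr (Sum.inl t))) := by
  unfold maxFlow
  congr 1
  ext r
  exact ⟨fun ⟨F⟩ =>
      ⟨F.uncross.liftSubdivision hB fun _ _ => F.uncross_crossBlock_mul_swap⟩,
    fun ⟨G⟩ => ⟨G.contractSubdivision hB⟩⟩
end

section
/- Let G = (V,D,B) be a mixed graph with indeterminate matrices Λ, Ω, let D_L, D_R ⊂ D with restrictions Λ^L, Λ^R, and let Γ = (I−Λ^L)⁻ᵀ Ω (I−Λ^R)⁻¹. Define the flow network G*_flow on {1,…,n} ∪ {1′,…,n′} with unit capacities: edges i→j for (j,i) ∈ D_L, i→i′ for all i, i→j′ for (i,j) ∈ B, and i′→j′ for (i,j) ∈ D_R. Then for any S, T ⊂ V with |S| = |T| = k, if the max-flow from S to T′ in G*_flow is strictly less than k, then |Γ_{S,T}| = 0 as a formal power series. -/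
open scoped BigOperators

/-! ### Unit-capacity flow networks -/

open scoped BigOperators

open Matrix MixedGraph

/-!
Menger's theorem turns the flow bound into a vertex cut `C` of `G*_flow` with fewer than `k`
vertices; write `A` for its unprimed and `B` for its primed part. Splitting every `Λ^L`-walk at
its first visit to `A` gives `(I - Λ^L)⁻¹ = W_L K_A + W_L J_A (I - Λ^L)⁻¹`, where `J_A`, `K_A`
are the diagonal projections onto `A` and its complement and `W_L` sums the walks that leave
only from vertices outside `A`; similarly on the right with `B`. Substituting both identities
into `Γ = (I - Λ^L)⁻ᵀ Ω (I - Λ^R)⁻¹` writes `Γ_{S,T}` as a product through `A ⊕ B` plus a sum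
over treks avoiding the cut. Such a trek would be a path from `S` to `T′` in `G*_flow` avoiding
`C`, so that sum is zero, and `Γ_{S,T}` has rank at most `|A| + |B| < k`.

Menger's theorem is derived from max-flow min-cut for 0/1 edge flows in the network obtained by
splitting every vertex into an entrance and an exit.
-/

open Relation

lemma Relation.ReflTransGen.restrict_ne_head {α : Type*} {R : α → α → Prop} {a b : α}
    (h : ReflTransGen R a b) : ReflTransGen (fun x y => R x y ∧ y ≠ a) a b := by
  induction h with
  | refl => exact .refl
  | @tail c d _ hcd ih =>
    by_cases hd : d = a
    · exact hd ▸ .refl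
    · exact ih.tail ⟨hcd, hd⟩

section EdgeFlow

variable {α : Type*}

structure IsUnitCapacity (H : α → α → Prop) (F : α → α → ℕ) : Prop where
  le_one : ∀ x y, F x y ≤ 1
  supp : ∀ x y, F x y ≠ 0 → H x y

lemma IsUnitCapacity.apply_eq_zero {H : α → α → Prop} {F : α → α → ℕ}
    (hF : IsUnitCapacity H F) {x y : α} (h : ¬ H x y) : F x y = 0 :=
  by_contra fun h' => h (hF.supp x y h')

def ResidualAdj (H : α → α → Prop) (F : α → α → ℕ) (a b : α) : Prop :=
  (H a b ∧ F a b = 0) ∨ (H b a ∧ F b a = 1)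

variable [Fintype α]

def netFlow (F : α → α → ℕ) (x : α) : ℤ := ∑ y, (F x y : ℤ) - ∑ y, (F y x : ℤ)

lemma netFlow_eq_zero_iff {F : α → α → ℕ} {x : α} :
    netFlow F x = 0 ↔ ∑ y, F x y = ∑ y, F y x := by
  rw [netFlow, sub_eq_zero]
  exact_mod_cast Iff.rfl

structure IsEdgeFlow (H : α → α → Prop) (Src Snk : Finset α) (F : α → α → ℕ) : Prop
    extends IsUnitCapacity H F where
  netFlow_eq_zero : ∀ x, x ∉ Src → x ∉ Snk → netFlow F x = 0

def flowValue (Src : Finset α) (F : α → α → ℕ) : ℤ := ∑ s ∈ Src, netFlow F s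

variable [DecidableEq α]

lemma netFlow_eq_of_eq_add {F F' : α → α → ℕ} {p q : α} {ε : ℤ}
    (h : ∀ x y, (F' x y : ℤ) = F x y + if x = p ∧ y = q then ε else 0) (z : α) :
    netFlow F' z = netFlow F z + (if z = p then ε else 0) - (if z = q then ε else 0) := by
  simp only [netFlow, h, Finset.sum_add_distrib, ite_and, Finset.sum_ite_eq', Finset.mem_univ,
    if_true]
  split_ifs <;> simp <;> ring

lemma IsUnitCapacity.exists_push {H : α → α → Prop} {F : α → α → ℕ}
    (hF : IsUnitCapacity H F) {a b : α} (hab : ResidualAdj H F a b) :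
    ∃ F', IsUnitCapacity H F' ∧
      (∀ z, netFlow F' z = netFlow F z + (if z = a then 1 else 0) - (if z = b then 1 else 0)) ∧
      ∀ x y, F' x y ≠ F x y → (x = a ∧ y = b) ∨ (x = b ∧ y = a) := by
  rcases hab with ⟨hH, h0⟩ | ⟨hH, h1⟩
  · refine ⟨fun x y => if x = a ∧ y = b then 1 else F x y, ⟨fun x y => ?_, fun x y => ?_⟩,
      netFlow_eq_of_eq_add fun x y => ?_, fun x y hxy => ?_⟩
    · split_ifs
      exacts [le_rfl, hF.le_one x y]
    · split_ifs with h
      · exact fun _ => h.1 ▸ h.2 ▸ hH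
      · exact hF.supp x y
    · split_ifs with h
      · simp [h.1, h.2, h0]
      · simp
    · exact Or.inl (by_contra fun h => hxy (if_neg h))
  · refine ⟨fun x y => if x = b ∧ y = a then 0 else F x y, ⟨fun x y => ?_, fun x y => ?_⟩,
      fun z => ?_, fun x y hxy => ?_⟩
    · split_ifs
      exacts [zero_le_one, hF.le_one x y]
    · split_ifs
      exacts [fun h => absurd rfl h, hF.supp x y]
    · rw [netFlow_eq_of_eq_add (p := b) (q := a) (ε := -1) fun x y => ?_]
      · split_ifs <;> ring
      · split_ifs with h
        · simp [h.1, h.2, h1]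
        · simp
    · exact Or.inr (by_contra fun h => hxy (if_neg h))

/-- The tail of the path is augmented first; since `a ∉ U`, this leaves the edge between `a` and
the next vertex untouched. -/
lemma IsUnitCapacity.exists_augment {H : α → α → Prop} {F : α → α → ℕ}
    (hF : IsUnitCapacity H F) (U : Finset α) :
    ∀ a b, a ∉ U → ReflTransGen (fun x y => ResidualAdj H F x y ∧ y ∈ U) a b →
    ∃ F', IsUnitCapacity H F' ∧
      (∀ z, netFlow F' z = netFlow F z + (if z = a then 1 else 0) - (if z = b then 1 else 0)) ∧
      ∀ x y, x ∉ insert a U → F' x y = F x y ∧ F' y x = F y x := by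
  induction U using Finset.strongInduction with
  | H U ih =>
  intro a b ha hab
  rcases ReflTransGen.cases_head_iff.mp hab with rfl | ⟨c, ⟨hac, hc⟩, hcb⟩
  · exact ⟨F, hF, fun z => by ring, fun _ _ _ => ⟨rfl, rfl⟩⟩
  have hcb' : ReflTransGen (fun x y => ResidualAdj H F x y ∧ y ∈ U.erase c) c b :=
    ReflTransGen.mono (fun x y h => ⟨h.1.1, Finset.mem_erase.mpr ⟨h.2, h.1.2⟩⟩) _ _
      hcb.restrict_ne_head
  obtain ⟨F₁, hF₁, hnet₁, hagree₁⟩ :=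
    ih _ (Finset.erase_ssubset hc) c b (Finset.notMem_erase c U) hcb'
  rw [Finset.insert_erase hc] at hagree₁
  have hac₁ : ResidualAdj H F₁ a c := by
    obtain ⟨e₁, e₂⟩ := hagree₁ a c ha
    rwa [ResidualAdj, e₁, e₂]
  obtain ⟨F', hF', hnet', hchg⟩ := hF₁.exists_push hac₁
  refine ⟨F', hF', fun z => by rw [hnet', hnet₁]; ring, fun x y hx => ?_⟩
  have hxU : x ∉ U := fun h => hx (Finset.mem_insert_of_mem h)
  have hxa : x ≠ a := fun h => hx (h ▸ Finset.mem_insert_self _ _)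
  have hxc : x ≠ c := fun h => hxU (h ▸ hc)
  obtain ⟨e₁, e₂⟩ := hagree₁ x y hxU
  constructor
  · by_contra h
    rcases hchg x y (by rwa [e₁]) with ⟨h', _⟩ | ⟨h', _⟩ <;> contradiction
  · by_contra h
    rcases hchg y x (by rwa [e₂]) with ⟨_, h'⟩ | ⟨_, h'⟩ <;> contradiction

lemma IsEdgeFlow.exists_flowValue_eq_add_one {H : α → α → Prop} {Src Snk : Finset α}
    {F : α → α → ℕ} (hF : IsEdgeFlow H Src Snk F) (hdisj : Disjoint Src Snk) {s t : α}
    (hs : s ∈ Src) (ht : t ∈ Snk) (hst : ReflTransGen (ResidualAdj H F) s t) :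
    ∃ F', IsEdgeFlow H Src Snk F' ∧ flowValue Src F' = flowValue Src F + 1 := by
  have hst' : ReflTransGen (fun x y => ResidualAdj H F x y ∧ y ∈ Finset.univ.erase s) s t :=
    ReflTransGen.mono (fun x y h => ⟨h.1, by simpa using h.2⟩) _ _ hst.restrict_ne_head
  obtain ⟨F', hF', hnet, -⟩ :=
    hF.toIsUnitCapacity.exists_augment _ s t (Finset.notMem_erase s _) hst'
  have htSrc : t ∉ Src := Finset.disjoint_right.mp hdisj ht
  refine ⟨F', ⟨hF', fun x hxSrc hxSnk => ?_⟩, ?_⟩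
  · rw [hnet, hF.netFlow_eq_zero x hxSrc hxSnk, if_neg (ne_of_mem_of_not_mem hs hxSrc).symm,
      if_neg (ne_of_mem_of_not_mem ht hxSnk).symm]
    simp
  · simp only [flowValue, hnet, Finset.sum_sub_distrib, Finset.sum_add_distrib,
      Finset.sum_ite_eq', if_pos hs, if_neg htSrc, sub_zero]

lemma sum_netFlow_eq_sum_compl (F : α → α → ℕ) (Z : Finset α) :
    ∑ x ∈ Z, netFlow F x = ∑ x ∈ Z, ∑ y ∈ Zᶜ, ((F x y : ℤ) - F y x) := by
  have hZ : ∑ x ∈ Z, ∑ y ∈ Z, ((F x y : ℤ) - F y x) = 0 := by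
    simp only [Finset.sum_sub_distrib]
    rw [Finset.sum_comm (f := fun x y => (F y x : ℤ)), sub_self]
  have hnet : ∀ x, netFlow F x =
      ∑ y ∈ Z, ((F x y : ℤ) - F y x) + ∑ y ∈ Zᶜ, ((F x y : ℤ) - F y x) :=
    fun x => by rw [Finset.sum_add_sum_compl, netFlow, Finset.sum_sub_distrib]
  simp only [hnet, Finset.sum_add_distrib, hZ, zero_add]

open scoped Classical in
noncomputable def cutEdges (H : α → α → Prop) (Z : Finset α) : Finset (α × α) :=
  (Z ×ˢ Zᶜ).filter fun e => H e.1 e.2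

lemma IsEdgeFlow.flowValue_eq_card_cutEdges {H : α → α → Prop} {Src Snk : Finset α}
    {F : α → α → ℕ} (hF : IsEdgeFlow H Src Snk F) {Z : Finset α} (hSrc : Src ⊆ Z)
    (hSnk : Disjoint Z Snk) (hZ : ∀ x ∈ Z, ∀ y, ResidualAdj H F x y → y ∈ Z) :
    flowValue Src F = (cutEdges H Z).card := by
  classical
  have hout : ∀ x ∈ Z, ∀ y ∈ Zᶜ, (F x y : ℤ) - F y x = if H x y then 1 else 0 := by
    intro x hx y hy
    have hy' : y ∉ Z := Finset.mem_compl.mp hy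
    have hyx : F y x = 0 := by
      by_contra h
      exact hy' (hZ x hx y (Or.inr ⟨hF.supp y x h, by have := hF.le_one y x; omega⟩))
    split_ifs with hH
    · have : F x y = 1 := by
        by_contra h
        exact hy' (hZ x hx y (Or.inl ⟨hH, by have := hF.le_one x y; omega⟩))
      simp [this, hyx]
    · simp [hF.apply_eq_zero hH, hyx]
  calc flowValue Src F = ∑ x ∈ Z, netFlow F x :=
        Finset.sum_subset hSrc fun x hxZ hxS =>
          hF.netFlow_eq_zero x hxS (Finset.disjoint_left.mp hSnk hxZ)
    _ = ∑ x ∈ Z, ∑ y ∈ Zᶜ, if H x y then (1 : ℤ) else 0 := by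
        rw [sum_netFlow_eq_sum_compl]
        exact Finset.sum_congr rfl fun x hx => Finset.sum_congr rfl (hout x hx)
    _ = (cutEdges H Z).card := by
        rw [cutEdges, Finset.card_filter, ← Finset.sum_product']
        push_cast
        rfl

theorem exists_cutEdges_card_lt {H : α → α → Prop} {Src Snk : Finset α}
    (hdisj : Disjoint Src Snk) {k : ℕ}
    (hk : ∀ F, IsEdgeFlow H Src Snk F → flowValue Src F < k) :
    ∃ Z : Finset α, Src ⊆ Z ∧ Disjoint Z Snk ∧ (cutEdges H Z).card < k := by
  classical
  obtain ⟨_, ⟨F, hF, rfl⟩, hmax⟩ :=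
    Int.exists_greatest_of_bdd (P := fun v => ∃ F, IsEdgeFlow H Src Snk F ∧ flowValue Src F = v)
      ⟨k, fun _ ⟨F, hF, hv⟩ => hv ▸ (hk F hF).le⟩
      ⟨0, fun _ _ => 0, ⟨⟨fun _ _ => zero_le_one, fun _ _ h => absurd rfl h⟩,
        fun _ _ _ => by simp [netFlow]⟩, by simp [flowValue, netFlow]⟩
  let Z := Finset.univ.filter fun x => ∃ s ∈ Src, ReflTransGen (ResidualAdj H F) s x
  have hSrc : Src ⊆ Z := fun s hs => Finset.mem_filter.mpr ⟨Finset.mem_univ s, s, hs, .refl⟩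
  have hZ : ∀ x ∈ Z, ∀ y, ResidualAdj H F x y → y ∈ Z := by
    intro x hx y hxy
    obtain ⟨s, hs, hsx⟩ := (Finset.mem_filter.mp hx).2
    exact Finset.mem_filter.mpr ⟨Finset.mem_univ y, s, hs, hsx.tail hxy⟩
  have hSnk : Disjoint Z Snk := by
    refine Finset.disjoint_left.mpr fun t htZ ht => ?_
    obtain ⟨s, hs, hst⟩ := (Finset.mem_filter.mp htZ).2
    obtain ⟨F', hF', hval⟩ := hF.exists_flowValue_eq_add_one hdisj hs ht hst
    linarith [hmax _ ⟨F', hF', rfl⟩]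
  refine ⟨Z, hSrc, hSnk, ?_⟩
  have := hk F hF
  rw [hF.flowValue_eq_card_cutEdges hSrc hSnk hZ] at this
  exact_mod_cast this

end EdgeFlow

section SplitNetwork

open Sum

variable {V : Type*}

/-- Vertex `v` becomes the edge from its entrance `inl v` to its exit `inr v`, so that vertex
capacities become edge capacities. Edges into sources and out of targets are dropped, as a
`UnitFlow` may not use them. -/
def splitEdges (E : V → V → Prop) (S T : Finset V) : V ⊕ V → V ⊕ V → Prop
  | inl v, inr w => v = w
  | inr v, inl w => E v w ∧ w ∉ S ∧ v ∉ T
  | _, _ => False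

variable {E : V → V → Prop} {S T : Finset V} {F : V ⊕ V → V ⊕ V → ℕ}

namespace IsUnitCapacity

variable (hF : IsUnitCapacity (splitEdges E S T) F) (v : V)
include hF

lemma apply_inl_inl (w : V) : F (inl v) (inl w) = 0 := hF.apply_eq_zero id

lemma apply_inr_inr (w : V) : F (inr v) (inr w) = 0 := hF.apply_eq_zero id

lemma apply_inl_inr_of_ne {w : V} (h : v ≠ w) : F (inl v) (inr w) = 0 := hF.apply_eq_zero h

variable [Fintype V]

lemma sum_apply_inl : ∑ x, F x (inl v) = ∑ u, F (inr u) (inl v) := by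
  simp [Fintype.sum_sum_type, hF.apply_inl_inl]

lemma sum_inl_apply : ∑ x, F (inl v) x = F (inl v) (inr v) := by
  simp [Fintype.sum_sum_type, hF.apply_inl_inl,
    Finset.sum_eq_single v fun u _ => hF.apply_inl_inr_of_ne v ∘ Ne.symm]

lemma sum_apply_inr : ∑ x, F x (inr v) = F (inl v) (inr v) := by
  simp [Fintype.sum_sum_type, hF.apply_inr_inr,
    Finset.sum_eq_single v fun u _ => hF.apply_inl_inr_of_ne u]

lemma sum_inr_apply : ∑ x, F (inr v) x = ∑ w, F (inr v) (inl w) := by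
  simp [Fintype.sum_sum_type, hF.apply_inr_inr]

end IsUnitCapacity

variable [Fintype V] [DecidableEq V]

namespace IsEdgeFlow

variable (hF : IsEdgeFlow (splitEdges E S T) (S.image inl) (T.image inr) F)
include hF

lemma sum_apply_inl_eq {v : V} (hv : v ∉ S) : ∑ u, F (inr u) (inl v) = F (inl v) (inr v) := by
  rw [← hF.sum_apply_inl, ← hF.sum_inl_apply,
    netFlow_eq_zero_iff.mp (hF.netFlow_eq_zero _ (by simpa using hv) (by simp))]

lemma sum_inr_apply_eq {v : V} (hv : v ∉ T) : ∑ w, F (inr v) (inl w) = F (inl v) (inr v) := by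
  rw [← hF.sum_inr_apply, ← hF.sum_apply_inr,
    netFlow_eq_zero_iff.mp (hF.netFlow_eq_zero _ (by simp) (by simpa using hv))]

def toUnitFlow : UnitFlow E S T (∑ s ∈ S, ∑ u, F (inr s) (inl u)) where
  f u w := F (inr u) (inl w)
  supp _ _ h := (hF.supp _ _ h).1
  edge_cap _ _ := hF.le_one _ _
  vert_cap_in v := by
    by_cases hv : v ∈ S
    · simp [hF.apply_eq_zero, splitEdges, hv]
    · exact (hF.sum_apply_inl_eq hv).trans_le (hF.le_one _ _)
  vert_cap_out v := by
    by_cases hv : v ∈ T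
    · simp [hF.apply_eq_zero, splitEdges, hv]
    · exact (hF.sum_inr_apply_eq hv).trans_le (hF.le_one _ _)
  no_into_src s hs := by simp [hF.apply_eq_zero, splitEdges, hs]
  no_outof_tgt t ht := by simp [hF.apply_eq_zero, splitEdges, ht]
  conserve v hS hT := (hF.sum_apply_inl_eq hS).trans (hF.sum_inr_apply_eq hT).symm
  value := rfl

lemma flowValue_eq (hST : Disjoint S T) :
    flowValue (S.image inl) F = ∑ s ∈ S, ∑ u, F (inr s) (inl u) := by
  rw [flowValue, Finset.sum_image (fun _ _ _ _ h => inl_injective h), Nat.cast_sum]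
  refine Finset.sum_congr rfl fun s hs => ?_
  have hin : ∑ x, F x (inl s) = 0 := by
    rw [hF.sum_apply_inl]
    simp [hF.apply_eq_zero, splitEdges, hs]
  rw [netFlow, ← Nat.cast_sum, ← Nat.cast_sum, hin, hF.sum_inl_apply,
    ← hF.sum_inr_apply_eq (Finset.disjoint_left.mp hST hs)]
  simp

end IsEdgeFlow

lemma UnitFlow.value_le_card {r : ℕ} (f : UnitFlow E S T r) : r ≤ S.card := by
  rw [← f.value, Finset.card_eq_sum_ones]
  exact Finset.sum_le_sum fun s _ => f.vert_cap_out s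

lemma UnitFlow.le_maxFlow {r : ℕ} (f : UnitFlow E S T r) : r ≤ maxFlow E S T :=
  le_csSup ⟨S.card, fun _ ⟨g⟩ => g.value_le_card⟩ ⟨f⟩

theorem exists_vertexCut (hST : Disjoint S T) {k : ℕ}
    (hk : ∀ r, Nonempty (UnitFlow E S T r) → r < k) :
    ∃ C : Finset V, C.card < k ∧
      ∀ s ∈ S, s ∉ C → ∀ t ∈ T, ¬ ReflTransGen (fun a b => E a b ∧ b ∉ C) s t := by
  have hdisj : Disjoint (S.image inl) (T.image (inr : V → V ⊕ V)) := by
    simp [Finset.disjoint_left]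
  obtain ⟨Z, hSrc, hSnk, hcard⟩ := exists_cutEdges_card_lt (H := splitEdges E S T) hdisj
    fun F hF => by rw [hF.flowValue_eq hST]; exact_mod_cast hk _ ⟨hF.toUnitFlow⟩
  classical
  -- the vertex of a cut edge `inl v → inr v` is `v`; of a cut edge `inr u → inl w` it is `w`
  let C := (cutEdges (splitEdges E S T) Z).image fun e => e.2.elim id id
  have hcut : ∀ x ∈ Z, ∀ y ∉ Z, splitEdges E S T x y → y.elim id id ∈ C := fun x hx y hy h =>
    Finset.mem_image.mpr ⟨(x, y), by simp [cutEdges, hx, hy, h], rfl⟩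
  have hexit : ∀ v, inl v ∈ Z → v ∉ C → inr v ∈ Z := fun v hv hvC =>
    by_contra fun h => hvC (hcut _ hv _ h rfl)
  refine ⟨C, Finset.card_image_le.trans_lt hcard, fun s hs hsC t ht hst => ?_⟩
  have hreach : ∀ x, ReflTransGen (fun a b => E a b ∧ b ∉ C) s x → inr x ∈ Z := by
    intro x hx
    induction hx with
    | refl => exact hexit s (hSrc (Finset.mem_image_of_mem _ hs)) hsC
    | @tail x y _ hxy ih =>
      refine hexit y ?_ hxy.2
      by_cases hyS : y ∈ S
      · exact hSrc (Finset.mem_image_of_mem _ hyS)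
      have hxT : x ∉ T := fun hxT =>
        Finset.disjoint_left.mp hSnk ih (Finset.mem_image_of_mem _ hxT)
      exact by_contra fun h => hxy.2 (hcut _ ih _ h ⟨hxy.1, hyS, hxT⟩)
  exact Finset.disjoint_left.mp hSnk (hreach t hst) (Finset.mem_image_of_mem _ ht)

end SplitNetwork

lemma eq_mul_add_mul_mul_of_one_sub_mul_eq_one {R : Type*} [Ring R] {A M W J K : R}
    (hJK : J + K = 1) (hA : (1 - M) * A = 1) (hW : W * (1 - K * M) = 1) :
    A = W * K + W * J * A := by
  have hJ : J = 1 - K := eq_sub_of_add_eq hJK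
  calc A = W * (1 - K * M) * A := by rw [hW, one_mul]
    _ = W * ((1 - K) * A + K * ((1 - M) * A)) := by noncomm_ring
    _ = W * K + W * J * A := by rw [hA, hJ]; noncomm_ring

namespace Matrix

variable {R ι : Type*} [Fintype ι]

lemma det_mul_eq_zero_of_card_lt [CommRing R] {k : ℕ} (hι : Fintype.card ι < k)
    (P : Matrix (Fin k) ι R) (Q : Matrix ι (Fin k) R) : (P * Q).det = 0 := by
  let e : ι ⊕ Fin (k - Fintype.card ι) ≃ Fin k := Fintype.equivFinOfCardEq (by simp; omega)
  have hPQ : P * Q = (fromCols P 0).submatrix id e.symm * (fromRows Q 0).submatrix e.symm id := by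
    rw [submatrix_mul_equiv, fromCols_mul_fromRows, Matrix.mul_zero, add_zero, submatrix_id_id]
  rw [hPQ, det_mul, det_eq_zero_of_column_eq_zero (e (.inr ⟨0, by omega⟩)) (by simp), zero_mul]

lemma exists_of_mul_mul_apply_ne_zero [NonUnitalNonAssocSemiring R] {X Y Z : Matrix ι ι R}
    {i j : ι} (h : (X * Y * Z) i j ≠ 0) : ∃ a b, X i a ≠ 0 ∧ Y a b ≠ 0 ∧ Z b j ≠ 0 := by
  rw [mul_apply] at h
  obtain ⟨b, -, hb⟩ := Finset.exists_ne_zero_of_sum_ne_zero h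
  have hXY := left_ne_zero_of_mul hb
  rw [mul_apply] at hXY
  obtain ⟨a, -, ha⟩ := Finset.exists_ne_zero_of_sum_ne_zero hXY
  exact ⟨a, b, left_ne_zero_of_mul ha, right_ne_zero_of_mul ha, right_ne_zero_of_mul hb⟩

variable [DecidableEq ι]

lemma reflTransGen_of_pow_apply_ne_zero [Semiring R] {M : Matrix ι ι R} {m : ℕ} {i j : ι}
    (h : (M ^ m) i j ≠ 0) : ReflTransGen (fun a b => M a b ≠ 0) i j := by
  induction m generalizing j with
  | zero =>
    by_cases hij : i = j
    · exact hij ▸ .refl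
    · simp [one_apply_ne hij] at h
  | succ m ih =>
    rw [pow_succ, mul_apply] at h
    obtain ⟨x, -, hx⟩ := Finset.exists_ne_zero_of_sum_ne_zero h
    exact (ih (left_ne_zero_of_mul hx)).tail (right_ne_zero_of_mul hx)

lemma one_sub_mul_eq_one_of_hasSum [TopologicalSpace R] [Ring R] [IsTopologicalRing R]
    [T2Space R] {M A : Matrix ι ι R} (h : ∀ i j, HasSum (fun m => (M ^ m) i j) (A i j)) :
    (1 - M) * A = 1 ∧ A * (1 - M) = 1 := by
  have hsum : HasSum (M ^ ·) A := Pi.hasSum.mpr fun i => Pi.hasSum.mpr (h i)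
  exact hsum.tsum_eq ▸ ⟨hsum.summable.one_sub_mul_tsum_pow, hsum.summable.tsum_pow_mul_one_sub⟩

def diagIndicator [Zero R] [One R] (A : Finset ι) : Matrix ι ι R :=
  diagonal fun i => if i ∈ A then 1 else 0

lemma mul_diagIndicator_apply [NonAssocSemiring R] (X : Matrix ι ι R) (A : Finset ι)
    (i j : ι) : (X * diagIndicator A : Matrix ι ι R) i j = if j ∈ A then X i j else 0 := by
  simp [diagIndicator, mul_diagonal]

lemma diagIndicator_mul_apply [NonAssocSemiring R] (X : Matrix ι ι R) (A : Finset ι)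
    (i j : ι) : (diagIndicator A * X : Matrix ι ι R) i j = if i ∈ A then X i j else 0 := by
  simp [diagIndicator, diagonal_mul]

lemma diagIndicator_add_diagIndicator_compl [AddMonoidWithOne R] (A : Finset ι) :
    diagIndicator A + diagIndicator Aᶜ = (1 : Matrix ι ι R) := by
  ext i j
  by_cases h : i ∈ A <;> simp [diagIndicator, diagonal, one_apply, h]

lemma submatrix_mul_diagIndicator_mul [NonAssocSemiring R] {m p : Type*}
    (X : Matrix ι ι R) (Y : Matrix ι ι R) (A : Finset ι) (f : m → ι) (g : p → ι) :
    (X * diagIndicator A * Y).submatrix f g =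
      X.submatrix f ((↑) : A → ι) * Y.submatrix ((↑) : A → ι) g := by
  ext i j
  rw [submatrix_apply, mul_apply, mul_apply]
  simp only [mul_diagIndicator_apply, ite_mul, zero_mul, Finset.sum_ite_mem, Finset.univ_inter,
    submatrix_apply]
  exact (Finset.sum_coe_sort A fun x => X (f i) x * Y x (g j)).symm

section PowerSeries

open MvPowerSeries MvPowerSeries.WithPiTopology

variable {σ : Type*}

lemma le_order_pow_apply [CommSemiring R] {M : Matrix ι ι (MvPowerSeries σ R)}
    (hM : ∀ i j, constantCoeff (M i j) = 0) (m : ℕ) (i j : ι) :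
    (m : ℕ∞) ≤ ((M ^ m) i j).order := by
  induction m generalizing j with
  | zero => simp
  | succ m ih =>
    rw [pow_succ, mul_apply]
    refine Finset.sum_induction _ (fun f : MvPowerSeries σ R => ((m + 1 : ℕ) : ℕ∞) ≤ f.order)
      (fun _ _ ha hb => (le_min ha hb).trans min_order_le_add) (by simp) fun x _ => ?_
    push_cast
    exact (add_le_add (ih x) (one_le_order_iff_constCoeff_eq_zero.mpr (hM x j))).trans
      le_order_mul

lemma summable_pow_of_constantCoeff_eq_zero [TopologicalSpace R] [CommSemiring R]
    {M : Matrix ι ι (MvPowerSeries σ R)} (hM : ∀ i j, constantCoeff (M i j) = 0) :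
    Summable (M ^ ·) := by
  refine Pi.summable.mpr fun i => Pi.summable.mpr fun j =>
    summable_of_tendsto_order_atTop_nhds_top ?_
  simp_rw [ENat.tendsto_nhds_top_iff_natCast_lt, Filter.eventually_atTop]
  exact fun n => ⟨n + 1, fun m hm =>
    (ENat.natCast_lt_natCast.mpr (Nat.lt_of_succ_le hm)).trans_le (le_order_pow_apply hM m i j)⟩

variable [TopologicalSpace R] [CommRing R] [IsTopologicalRing R] [T2Space R]

lemma exists_eq_mul_diagIndicator_compl_add {M Q : Matrix ι ι (MvPowerSeries σ R)}
    (hM : ∀ i j, constantCoeff (M i j) = 0) (hQ : (1 - M) * Q = 1) (A : Finset ι) :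
    ∃ W : Matrix ι ι (MvPowerSeries σ R), Q = W * diagIndicator Aᶜ + W * diagIndicator A * Q ∧
      ∀ a b, (W * diagIndicator Aᶜ : Matrix ι ι (MvPowerSeries σ R)) a b ≠ 0 →
        b ∉ A ∧ ReflTransGen (fun x y => M x y ≠ 0 ∧ x ∉ A) a b := by
  set K : Matrix ι ι (MvPowerSeries σ R) := diagIndicator Aᶜ
  have hKM : ∀ i j, (K * M) i j = if i ∈ A then 0 else M i j := fun i j => by
    simp [K, diagIndicator_mul_apply, ite_not]
  have hsum : Summable ((K * M) ^ ·) :=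
    summable_pow_of_constantCoeff_eq_zero fun i j => by rw [hKM]; split_ifs <;> simp [hM]
  refine ⟨∑' m, (K * M) ^ m, eq_mul_add_mul_mul_of_one_sub_mul_eq_one
    (diagIndicator_add_diagIndicator_compl A) hQ hsum.tsum_pow_mul_one_sub, fun a b hab => ?_⟩
  rw [mul_diagIndicator_apply] at hab
  by_cases hb : b ∈ A
  · simp [hb] at hab
  simp only [Finset.mem_compl, hb, not_false_eq_true, if_true] at hab
  obtain ⟨m, hm⟩ : ∃ m, ((K * M) ^ m) a b ≠ 0 := by
    by_contra! h
    refine hab ((Pi.hasSum.mp (Pi.hasSum.mp hsum.hasSum a) b).unique ?_)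
    simp [h]
  refine ⟨hb, ReflTransGen.mono (fun x y hxy => ?_) _ _ (reflTransGen_of_pow_apply_ne_zero hm)⟩
  rw [hKM] at hxy
  split_ifs at hxy with hx
  exacts [absurd rfl hxy, ⟨hxy, hx⟩]

theorem det_submatrix_transpose_mul_mul_eq_zero {ΛL ΛR Ω AL AR : Matrix ι ι (MvPowerSeries σ R)}
    (hΛL : ∀ i j, constantCoeff (ΛL i j) = 0) (hΛR : ∀ i j, constantCoeff (ΛR i j) = 0)
    (hAL : (1 - ΛL) * AL = 1) (hAR : AR * (1 - ΛR) = 1) {k : ℕ} {S T : Fin k → ι}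
    {A B : Finset ι} (hAB : A.card + B.card < k)
    (hsep : ∀ i j l r, S i ∉ A → ReflTransGen (fun x y => ΛL x y ≠ 0 ∧ x ∉ A) l (S i) →
      Ω l r ≠ 0 → r ∉ B → ReflTransGen (fun x y => ΛR x y ≠ 0 ∧ y ∉ B) r (T j) → False) :
    ((ALᵀ * Ω * AR).submatrix S T).det = 0 := by
  obtain ⟨WL, hALdec, hWL⟩ := exists_eq_mul_diagIndicator_compl_add hΛL hAL A
  obtain ⟨WR, hARdec, hWR⟩ := exists_eq_mul_diagIndicator_compl_add
    (M := ΛRᵀ) (fun i j => hΛR j i) (by simpa using congrArg transpose hAR) B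
  set JA : Matrix ι ι (MvPowerSeries σ R) := diagIndicator A
  set KA : Matrix ι ι (MvPowerSeries σ R) := diagIndicator Aᶜ
  set JB : Matrix ι ι (MvPowerSeries σ R) := diagIndicator B
  set KB : Matrix ι ι (MvPowerSeries σ R) := diagIndicator Bᶜ
  have hALt : ALᵀ = KA * WLᵀ + ALᵀ * JA * WLᵀ := by
    conv_lhs => rw [hALdec]
    simp [JA, KA, diagIndicator, mul_assoc]
  have hARt : AR = KB * WRᵀ + AR * JB * WRᵀ := by
    conv_lhs => rw [← transpose_transpose AR, hARdec]
    simp [JB, KB, diagIndicator, mul_assoc]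
  have hdec : ALᵀ * Ω * AR = ALᵀ * JA * (WLᵀ * Ω * AR) + (KA * WLᵀ * Ω * AR) * JB * WRᵀ +
      (WL * KA)ᵀ * Ω * (WR * KB)ᵀ := by
    calc ALᵀ * Ω * AR = (KA * WLᵀ + ALᵀ * JA * WLᵀ) * Ω * AR := by rw [← hALt]
      _ = ALᵀ * JA * (WLᵀ * Ω * AR) + KA * WLᵀ * Ω * (KB * WRᵀ + AR * JB * WRᵀ) := by
        rw [← hARt]; noncomm_ring
      _ = _ := by simp [KA, KB, diagIndicator]; noncomm_ring
  have hN : ((WL * KA)ᵀ * Ω * (WR * KB)ᵀ).submatrix S T = 0 := by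
    refine Matrix.ext fun i j => by_contra fun h => ?_
    rw [submatrix_apply, Matrix.zero_apply] at h
    obtain ⟨l, r, hl, hlr, hr⟩ := exists_of_mul_mul_apply_ne_zero h
    obtain ⟨hsA, hls⟩ := hWL l (S i) hl
    obtain ⟨hrB, htr⟩ := hWR (T j) r hr
    exact hsep i j l r hsA hls hlr hrB htr.swap
  simp only [hdec, submatrix_add, Pi.add_apply, hN, add_zero, JA, JB,
    submatrix_mul_diagIndicator_mul]
  rw [← fromCols_mul_fromRows]
  exact det_mul_eq_zero_of_card_lt
    (by rwa [Fintype.card_sum, Fintype.card_coe, Fintype.card_coe]) _ _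

end PowerSeries

end Matrix

lemma flowEdgesLR_reflTransGen {V : Type*} {DL DR B : V → V → Prop} {C : Finset (V ⊕ V)}
    {s l r t : V} (hl : ReflTransGen (fun x y => DL x y ∧ x ∉ C.toLeft) l s)
    (hlr : l = r ∨ B l r) (hrC : r ∉ C.toRight)
    (hr : ReflTransGen (fun x y => DR x y ∧ y ∉ C.toRight) r t) :
    ReflTransGen (fun a b => flowEdgesLR DL DR B a b ∧ b ∉ C) (.inl s) (.inr t) :=
  (hl.swap.lift Sum.inl fun _ _ h => ⟨h.1, by simpa using h.2⟩).trans <|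
    .head (show flowEdgesLR DL DR B (.inl l) (.inr r) ∧ .inr r ∉ C from
        ⟨hlr, by simpa using hrC⟩)
      (hr.lift Sum.inr fun _ _ h => ⟨h.1, by simpa using h.2⟩)

lemma rel_of_apply_ne_zero {ι α : Type*} [Zero α] {D : ι → ι → Prop} [DecidableRel D]
    {M c : ι → ι → α} (hM : ∀ i j, M i j = if D i j then c i j else 0) {i j : ι}
    (h : M i j ≠ 0) : D i j :=
  by_contra fun hD => h (by rw [hM, if_neg hD])

lemma constantCoeff_eq_zero_of_eq_ite {ι σ R : Type*} [CommSemiring R] {D : ι → ι → Prop}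
    [DecidableRel D] {M : ι → ι → MvPowerSeries σ R} {x : ι → ι → σ}
    (hM : ∀ i j, M i j = if D i j then MvPowerSeries.X (x i j) else 0) (i j : ι) :
    MvPowerSeries.constantCoeff (M i j) = 0 := by
  rw [hM]; split_ifs <;> simp

theorem det_zero_of_maxFlow_lt_general {n k : ℕ} (G : MixedGraph n)
    [DecidableRel G.B]
    (DL DR : Fin n → Fin n → Prop) [DecidableRel DL] [DecidableRel DR]
    (LamL LamR Om :
      Matrix (Fin n) (Fin n) (MvPowerSeries ((Fin n × Fin n) ⊕ (Fin n × Fin n)) ℚ))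
    (hLamL : ∀ i j, LamL i j = if DL i j then MvPowerSeries.X (Sum.inl (i, j)) else 0)
    (hLamR : ∀ i j, LamR i j = if DR i j then MvPowerSeries.X (Sum.inl (i, j)) else 0)
    (hOm : ∀ i j, Om i j =
      if i = j ∨ G.B i j then MvPowerSeries.X (Sum.inr (i, j)) else 0)
    (AL AR : Matrix (Fin n) (Fin n) (MvPowerSeries ((Fin n × Fin n) ⊕ (Fin n × Fin n)) ℚ))
    (hAL : ∀ i j, HasSum (fun m : ℕ => (LamL ^ m) i j) (AL i j))
    (hAR : ∀ i j, HasSum (fun m : ℕ => (LamR ^ m) i j) (AR i j))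
    (Gam : Matrix (Fin n) (Fin n) (MvPowerSeries ((Fin n × Fin n) ⊕ (Fin n × Fin n)) ℚ))
    (hGam : Gam = ALᵀ * Om * AR)
    (S T : Fin k → Fin n)
    (hflow : maxFlow (flowEdgesLR DL DR G.B)
        (Finset.univ.image fun i => Sum.inl (S i))
        (Finset.univ.image fun i => Sum.inr (T i)) < k) :
    (Gam.submatrix S T).det = 0 := by
  have : IsTopologicalRing (MvPowerSeries ((Fin n × Fin n) ⊕ (Fin n × Fin n)) ℚ) :=
    MvPowerSeries.WithPiTopology.instIsTopologicalRing _ _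
  have : T2Space (MvPowerSeries ((Fin n × Fin n) ⊕ (Fin n × Fin n)) ℚ) :=
    MvPowerSeries.WithPiTopology.instT2Space
  obtain ⟨C, hC, hsep⟩ := exists_vertexCut (by simp [Finset.disjoint_left])
    fun r ⟨f⟩ => f.le_maxFlow.trans_lt hflow
  rw [hGam]
  refine det_submatrix_transpose_mul_mul_eq_zero (constantCoeff_eq_zero_of_eq_ite hLamL)
    (constantCoeff_eq_zero_of_eq_ite hLamR) (one_sub_mul_eq_one_of_hasSum hAL).1
    (one_sub_mul_eq_one_of_hasSum hAR).2 (C.card_toLeft_add_card_toRight.trans_lt hC)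
    fun i j l r hsA hls hlr hrB hrt => hsep _ (Finset.mem_image_of_mem _ (Finset.mem_univ i))
      (by simpa using hsA) _ (Finset.mem_image_of_mem _ (Finset.mem_univ j)) ?_
  exact flowEdgesLR_reflTransGen
    (hls.mono (fun _ _ h => ⟨rel_of_apply_ne_zero hLamL h.1, h.2⟩) _ _)
    (rel_of_apply_ne_zero hOm hlr) hrB
    (hrt.mono (fun _ _ h => ⟨rel_of_apply_ne_zero hLamR h.1, h.2⟩) _ _)

/-- **Vanishing determinant lemma (asymmetric trek separation).**
Let `G = (V, D, B)` be a mixed graph with indeterminate matrices `Λ, Ω`, let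
`D_L, D_R ⊂ D` with restrictions `Λ^L, Λ^R`, and let
`Γ = (I - Λ^L)⁻ᵀ Ω (I - Λ^R)⁻¹` (the inverses being the formal geometric
series `AL`, `AR`).  Consider the unit-capacity flow network `G*_flow` on
`{1,…,n} ∪ {1′,…,n′}` with edges `i → j` for `(j,i) ∈ D_L`, `i → i′` for all
`i`, `i → j′` for `(i,j) ∈ B`, and `i′ → j′` for `(i,j) ∈ D_R`.  Then for any
`S, T ⊂ V` with `|S| = |T| = k`, if the max-flow from `S` to `T′` in
`G*_flow` is strictly less than `k`, then `|Γ_{S,T}| = 0` as a formal power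
series. -/
theorem det_zero_of_maxFlow_lt {n k : ℕ} (G : MixedGraph n)
    [DecidableRel G.D] [DecidableRel G.B]
    (DL DR : Fin n → Fin n → Prop) [DecidableRel DL] [DecidableRel DR]
    (hDL : ∀ i j, DL i j → G.D i j) (hDR : ∀ i j, DR i j → G.D i j)
    (LamL LamR Om :
      Matrix (Fin n) (Fin n) (MvPowerSeries ((Fin n × Fin n) ⊕ (Fin n × Fin n)) ℚ))
    (hLamL : ∀ i j, LamL i j = if DL i j then MvPowerSeries.X (Sum.inl (i, j)) else 0)
    (hLamR : ∀ i j, LamR i j = if DR i j then MvPowerSeries.X (Sum.inl (i, j)) else 0)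
    (hOm : ∀ i j, Om i j =
      if i = j ∨ G.B i j then MvPowerSeries.X (Sum.inr (i, j)) else 0)
    (AL AR : Matrix (Fin n) (Fin n) (MvPowerSeries ((Fin n × Fin n) ⊕ (Fin n × Fin n)) ℚ))
    (hAL : ∀ i j, HasSum (fun m : ℕ => (LamL ^ m) i j) (AL i j))
    (hAR : ∀ i j, HasSum (fun m : ℕ => (LamR ^ m) i j) (AR i j))
    (Gam : Matrix (Fin n) (Fin n) (MvPowerSeries ((Fin n × Fin n) ⊕ (Fin n × Fin n)) ℚ))
    (hGam : Gam = ALᵀ * Om * AR)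
    (S T : Fin k → Fin n) (hS : Function.Injective S) (hT : Function.Injective T)
    (hflow : maxFlow (flowEdgesLR DL DR G.B)
        (Finset.univ.image fun i => Sum.inl (S i))
        (Finset.univ.image fun i => Sum.inr (T i)) < k) :
    (Gam.submatrix S T).det = 0 :=
  det_zero_of_maxFlow_lt_general G DL DR LamL LamR Om hLamL hLamR hOm AL AR hAL hAR Gam hGam S T
    hflow
end

section
/- Let G be the mixed graph on {1,…,5} with directed edges 1→2, 1→3, 1→4, 4→5 and bidirected edges 1↔2, 1↔3, 1↔4, 1↔5, and let Σ = (I−Λ)⁻ᵀΩ(I−Λ)⁻¹ with symbolic parameters. Then |Σ_{{1,2,4},{1,3,5}}| − λ₄₅ |Σ_{{1,2,4},{1,3,4}}| = 0 identically, and |Σ_{{1,2,4},{1,3,4}}| is not the zero polynomial; hence λ₄₅ = |Σ_{{1,2,4},{1,3,5}}| / |Σ_{{1,2,4},{1,3,4}}| generically. -/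
/-!
`Λ` is nilpotent and the only directed path of length two is `1 → 4 → 5`, so `(I - Λ)⁻¹` is
`I + Λ + Λ²` with the single quadratic entry `λ₁₄λ₄₅`, and `Σ` can be written down entrywise.
On the rows `{1,2,4}`, column `5` of `Σ` is `λ₄₅` times column `4` plus `ω₁₅ v`, and column `3` is
`λ₁₃` times column `1` plus `ω₁₃ v`, where `v = (1, λ₁₂, λ₁₄)`; hence the two minors differ by the
factor `λ₄₅`, and the smaller one is the monomial `-ω₁₂ω₁₃ω₄₄`.
-/

open Matrix

/-- The polynomial ring for the 5-node example: indeterminates `λ_{ij}`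
(left summand) and `ω_{ij}` (right summand), over `ℚ`. -/
local notation "R16" => MvPolynomial ((Fin 5 × Fin 5) ⊕ (Fin 5 × Fin 5)) ℚ

open MvPolynomial

namespace FigureTwo

noncomputable section

abbrev lam (i j : Fin 5) : R16 := X (Sum.inl (i, j))

abbrev om (i j : Fin 5) : R16 := X (Sum.inr (i, j))

def directedEdges : Matrix (Fin 5) (Fin 5) R16 := Matrix.of fun i j =>
  if (i, j) = (0, 1) ∨ (i, j) = (0, 2) ∨ (i, j) = (0, 3) ∨ (i, j) = (3, 4)
  then lam i j else 0

def bidirectedEdges : Matrix (Fin 5) (Fin 5) R16 := Matrix.of fun i j =>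
  if i = j then om i i else if i = 0 then om 0 j else if j = 0 then om 0 i else 0

def sigma : Matrix (Fin 5) (Fin 5) R16 :=
  (1 - directedEdges)⁻¹ᵀ * bidirectedEdges * (1 - directedEdges)⁻¹

def pathSums : Matrix (Fin 5) (Fin 5) R16 :=
  !![1, lam 0 1, lam 0 2, lam 0 3, lam 0 3 * lam 3 4;
     0, 1, 0, 0, 0;
     0, 0, 1, 0, 0;
     0, 0, 0, 1, lam 3 4;
     0, 0, 0, 0, 1]

theorem one_sub_directedEdges_mul_pathSums : (1 - directedEdges) * pathSums = 1 := by
  ext i j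
  fin_cases i <;> fin_cases j <;>
    simp [directedEdges, pathSums, mul_apply, one_apply, Fin.sum_univ_five]

theorem inv_one_sub_directedEdges : (1 - directedEdges)⁻¹ = pathSums :=
  inv_eq_right_inv one_sub_directedEdges_mul_pathSums

theorem bidirectedEdges_eq : bidirectedEdges =
    !![om 0 0, om 0 1, om 0 2, om 0 3, om 0 4;
       om 0 1, om 1 1, 0, 0, 0;
       om 0 2, 0, om 2 2, 0, 0;
       om 0 3, 0, 0, om 3 3, 0;
       om 0 4, 0, 0, 0, om 4 4] := by
  ext i j
  fin_cases i <;> fin_cases j <;> simp [bidirectedEdges]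

theorem sigma_eq : sigma = pathSumsᵀ * bidirectedEdges * pathSums := by
  rw [sigma, inv_one_sub_directedEdges]

-- Minors are named by the paper's 1-based labels of their rows and columns.
theorem det_sigma_minor_124_134 :
    (sigma.submatrix ![0, 1, 3] ![0, 2, 3]).det = -(om 0 1 * om 0 2 * om 3 3) := by
  rw [sigma_eq, bidirectedEdges_eq, det_fin_three]
  simp only [pathSums, submatrix_apply, mul_apply, transpose_apply, of_apply, Fin.sum_univ_five,
    cons_val', cons_val_zero, cons_val_one, cons_val, cons_val_fin_one]
  ring

theorem det_sigma_minor_124_135 :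
    (sigma.submatrix ![0, 1, 3] ![0, 2, 4]).det = lam 3 4 * -(om 0 1 * om 0 2 * om 3 3) := by
  rw [sigma_eq, bidirectedEdges_eq, det_fin_three]
  simp only [pathSums, submatrix_apply, mul_apply, transpose_apply, of_apply, Fin.sum_univ_five,
    cons_val', cons_val_zero, cons_val_one, cons_val, cons_val_fin_one]
  ring

end

end FigureTwo

open FigureTwo in
/-- **The example of Figure 2.**  Let `G` be the mixed graph on `{1,…,5}`
(here `{0,…,4}`) with directed edges `1→2, 1→3, 1→4, 4→5` and bidirected edges
`1↔2, 1↔3, 1↔4, 1↔5`, and let `Σ = (I-Λ)⁻ᵀ Ω (I-Λ)⁻¹` with symbolic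
parameters.  Then `|Σ_{{1,2,4},{1,3,5}}| - λ₄₅ |Σ_{{1,2,4},{1,3,4}}| = 0`
identically, and `|Σ_{{1,2,4},{1,3,4}}|` is not the zero polynomial; hence
`λ₄₅ = |Σ_{{1,2,4},{1,3,5}}| / |Σ_{{1,2,4},{1,3,4}}|` in the field of rational
functions. -/
theorem figure_two_identification
    (Lam Om Sig : Matrix (Fin 5) (Fin 5) R16)
    (hLam : Lam = Matrix.of fun i j =>
      if (i, j) = (0, 1) ∨ (i, j) = (0, 2) ∨ (i, j) = (0, 3) ∨ (i, j) = (3, 4)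
      then MvPolynomial.X (Sum.inl (i, j)) else 0)
    (hOm : Om = Matrix.of fun i j =>
      if i = j then MvPolynomial.X (Sum.inr (i, i))
      else if i = 0 then MvPolynomial.X (Sum.inr ((0 : Fin 5), j))
      else if j = 0 then MvPolynomial.X (Sum.inr ((0 : Fin 5), i))
      else 0)
    (hSig : Sig = (1 - Lam)⁻¹ᵀ * Om * (1 - Lam)⁻¹) :
    (Sig.submatrix ![0, 1, 3] ![0, 2, 4]).det
        - Lam 3 4 * (Sig.submatrix ![0, 1, 3] ![0, 2, 3]).det = 0
      ∧ (Sig.submatrix ![0, 1, 3] ![0, 2, 3]).det ≠ 0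
      ∧ algebraMap R16 (FractionRing R16) (Lam 3 4) =
          algebraMap R16 (FractionRing R16) (Sig.submatrix ![0, 1, 3] ![0, 2, 4]).det
            / algebraMap R16 (FractionRing R16)
                (Sig.submatrix ![0, 1, 3] ![0, 2, 3]).det := by
  obtain rfl : Lam = directedEdges := hLam
  obtain rfl : Om = bidirectedEdges := hOm
  obtain rfl : Sig = sigma := hSig
  have hLam34 : directedEdges 3 4 = lam 3 4 := by simp [directedEdges]
  have hminor_ne : -(om 0 1 * om 0 2 * om 3 3) ≠ 0 := by simp [X_ne_zero]
  rw [det_sigma_minor_124_135, det_sigma_minor_124_134, hLam34]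
  refine ⟨sub_self _, hminor_ne, ?_⟩
  rw [map_mul, mul_div_cancel_right₀]
  exact (map_ne_zero_iff _ (IsFractionRing.injective R16 (FractionRing R16))).mpr hminor_ne
end
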